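/- arXiv:1906.05711 — 7 statements merged into one kernel-verified Lean document; each statement's English description precedes it below -/
import Mathlib

section
/- Let p > 1, τ > 0, let μ be the unique positive root of χ(z) = z + 1 − p e^{−zτ}, set q̄₂ := −p e^{−2μτ}/χ(2μ), and let u* be the positive heteroclinic solution of u'(t) = −u(t) + p u(t−τ) e^{−u(t−τ)} with u*(−∞)=0, normalized at −∞ so that u*(t) = e^{μt} + q̄₂ e^{2μt} + O(e^{3μt}) as t → −∞. Then e^{μt} + q̄₂ e^{2μt} < u*(t) < e^{μt} for all t ≤ 0, and in fact u*(t) < e^{μt} for all t ∈ ℝ. -/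
open Real Filter Set Asymptotics Topology

private lemma expD (c t : ℝ) : HasDerivAt (fun s => Real.exp (c*s)) (c * Real.exp (c*t)) t := by
  have h := ((hasDerivAt_id t).const_mul c).exp
  simpa [mul_comm] using h

private lemma exp0 (c : ℝ) (hc : 0 < c) :
    Tendsto (fun t => Real.exp (c*t)) atBot (𝓝 0) :=
  Real.tendsto_exp_atBot.comp (tendsto_id.const_mul_atBot hc)

private lemma no_first_zero (v d : ℝ → ℝ) (hd : ∀ t, HasDerivAt v (d t) t)
    (T : ℝ) (hneg : ∀ t ≤ T, v t < 0)
    (hstep : ∀ t, (∀ s, s < t → v s < 0) → v t = 0 → d t < 0) :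
    ∀ t, v t < 0 := by
  have hcont : Continuous v := by
    rw [continuous_iff_continuousAt]; exact fun t => (hd t).continuousAt
  by_contra h
  push_neg at h
  obtain ⟨t1, ht1⟩ := h
  have hS1 : ({t | 0 ≤ v t} : Set ℝ).Nonempty := ⟨t1, ht1⟩
  have hSb : BddBelow {t | 0 ≤ v t} := by
    refine ⟨T, fun t ht => ?_⟩
    by_contra hc
    push_neg at hc
    exact absurd ht (not_le.mpr (hneg t hc.le))
  have hScl : IsClosed {t | 0 ≤ v t} := isClosed_le continuous_const hcont
  set t0 := sInf {t | 0 ≤ v t} with ht0def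
  have ht0S : 0 ≤ v t0 := hScl.csInf_mem hS1 hSb
  have hbefore : ∀ s, s < t0 → v s < 0 := by
    intro s hs
    by_contra hc
    push_neg at hc
    exact absurd (csInf_le hSb hc) (not_le.mpr hs)
  have hv0 : v t0 = 0 := by
    refine le_antisymm ?_ ht0S
    have htd : Tendsto v (𝓝[<] t0) (𝓝 (v t0)) :=
      (hcont.tendsto t0).mono_left nhdsWithin_le_nhds
    exact le_of_tendsto htd
      (eventually_nhdsWithin_of_forall (fun s hs => (hbefore s hs).le))
  have hslope : Tendsto (slope v t0) (𝓝[<] t0) (𝓝 (d t0)) :=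
    (hasDerivAt_iff_tendsto_slope.mp (hd t0)).mono_left
      (nhdsWithin_mono _ (fun s hs => ne_of_lt hs))
  have hge : 0 ≤ d t0 := by
    refine ge_of_tendsto hslope ?_
    refine eventually_nhdsWithin_of_forall (fun s hs => ?_)
    have h1 : v s < 0 := hbefore s hs
    have h2 : slope v t0 s = v s / (s - t0) := by
      simp [slope, hv0]
      ring
    rw [h2]
    exact le_of_lt (div_pos_of_neg_of_neg h1 (by simp only [mem_Iio] at hs; linarith))
  exact absurd (hstep t0 hbefore hv0) (not_lt.mpr hge)

set_option maxHeartbeats 2000000 in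
/-- two-sided bounds `e^{μt} + q̄₂ e^{2μt} < u*(t) < e^{μt}` for `t ≤ 0`
(and the upper bound on all of ℝ) for the normalized heteroclinic solution of the
Nicholson's blowflies delay equation. -/
theorem stmt_4 (p τ μ q2 : ℝ) (u : ℝ → ℝ) (hp : 1 < p) (hτ : 0 < τ)
    (hμ : 0 < μ) (hμroot : μ + 1 - p * Real.exp (-μ*τ) = 0)
    (hq2 : q2 = -p * Real.exp (-(2*μ)*τ) / (2*μ + 1 - p * Real.exp (-(2*μ)*τ)))
    (hupos : ∀ t, 0 < u t)
    (hueq : ∀ t : ℝ, HasDerivAt u (-u t + p * u (t-τ) * Real.exp (-(u (t-τ)))) t)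
    (hubot : Tendsto u atBot (nhds 0))
    (hnorm : (fun t => u t - (Real.exp (μ*t) + q2 * Real.exp (2*μ*t)))
        =O[atBot] fun t => Real.exp (3*μ*t)) :
    (∀ t : ℝ, t ≤ 0 → Real.exp (μ*t) + q2 * Real.exp (2*μ*t) < u t ∧ u t < Real.exp (μ*t)) ∧
    (∀ t : ℝ, u t < Real.exp (μ*t)) := by
  have hp0 : 0 < p := by linarith
  have hpe : p * Real.exp (-μ*τ) = μ + 1 := by linarith
  have hEτ1 : Real.exp (-μ*τ) < 1 := by
    rw [← Real.exp_zero]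
    exact Real.exp_lt_exp.mpr (by nlinarith)
  -- χ(lam) > 0 for μ < lam
  have hχ : ∀ lam : ℝ, μ < lam → p * Real.exp (-lam*τ) < lam + 1 := by
    intro lam h
    have h1 : Real.exp (-lam*τ) < Real.exp (-μ*τ) := Real.exp_lt_exp.mpr (by nlinarith)
    nlinarith [Real.exp_pos (-lam*τ)]
  -- big-O extraction
  obtain ⟨C, hC0, hCbd⟩ := hnorm.exists_pos
  rw [Asymptotics.isBigOWith_iff] at hCbd
  have hCbd' : ∀ᶠ t in atBot,
      |u t - (Real.exp (μ*t) + q2 * Real.exp (2*μ*t))| ≤ C * Real.exp (3*μ*t) := by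
    filter_upwards [hCbd] with t ht
    simpa [abs_of_pos (Real.exp_pos (3*μ*t))] using ht
  -- q2 facts
  have hD1 : Real.exp (-(2*μ)*τ) = Real.exp (-μ*τ) * Real.exp (-μ*τ) := by
    rw [← Real.exp_add]; congr 1; ring
  have hχ2 : 0 < 2*μ + 1 - p * Real.exp (-(2*μ)*τ) := by
    rw [hD1]
    have h1 : p * (Real.exp (-μ*τ) * Real.exp (-μ*τ)) = (μ + 1) * Real.exp (-μ*τ) := by
      rw [← mul_assoc, hpe]
    nlinarith [Real.exp_pos (-μ*τ)]
  have hq2neg : q2 < 0 := by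
    rw [hq2]
    apply div_neg_of_neg_of_pos _ hχ2
    have := Real.exp_pos (-(2*μ)*τ)
    nlinarith
  have hq2chi : q2 * (2*μ + 1 - p * Real.exp (-(2*μ)*τ)) = -p * Real.exp (-(2*μ)*τ) := by
    rw [hq2, div_mul_cancel₀ _ (ne_of_gt hχ2)]
  -- shorthand for the derivative of u
  set du : ℝ → ℝ := fun t => -u t + p * u (t-τ) * Real.exp (-(u (t-τ))) with hdudef
  -- key differential inequality for w = u - e^{μt}
  have hkey1 : ∀ t : ℝ, du t - μ * Real.exp (μ*t)
      < -(u t - Real.exp (μ*t)) + p * (u (t-τ) - Real.exp (μ*(t-τ))) := by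
    intro t
    have hE : Real.exp (μ*(t-τ)) = Real.exp (μ*t) * Real.exp (-μ*τ) := by
      rw [← Real.exp_add]; congr 1; ring
    have hu := hupos (t-τ)
    have hx : Real.exp (-(u (t-τ))) < 1 := by
      rw [← Real.exp_zero]; exact Real.exp_lt_exp.mpr (by linarith)
    have h1 : p * u (t-τ) * Real.exp (-(u (t-τ))) < p * u (t-τ) := by
      nlinarith [mul_pos hp0 hu]
    have h2 : p * (Real.exp (μ*t) * Real.exp (-μ*τ)) = (μ + 1) * Real.exp (μ*t) := by
      rw [mul_comm (Real.exp (μ*t)), ← mul_assoc, hpe]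
    rw [hE]
    simp only [hdudef]
    linarith [h1, h2]
  -- the epsilon family: upper bound
  have hwle : ∀ ε : ℝ, 0 < ε → ∀ t : ℝ,
      u t - Real.exp (μ*t) - ε * Real.exp ((3*μ/2)*t) < 0 := by
    intro ε hε
    set lam := 3*μ/2 with hlamdef
    have hlam : μ < lam := by rw [hlamdef]; linarith
    -- eventual negativity at -∞
    have ev2 : ∀ᶠ t in atBot, C * Real.exp ((3*μ - lam)*t) < ε := by
      have h0 : Tendsto (fun t => C * Real.exp ((3*μ - lam)*t)) atBot (𝓝 (C * 0)) :=
        (exp0 (3*μ - lam) (by rw [hlamdef]; linarith)).const_mul C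
      rw [mul_zero] at h0
      exact h0.eventually_lt_const hε
    have hneg : ∀ᶠ t in atBot, u t - Real.exp (μ*t) - ε * Real.exp (lam*t) < 0 := by
      filter_upwards [hCbd', ev2] with t h1 h2
      have h3 : u t ≤ Real.exp (μ*t) + q2 * Real.exp (2*μ*t) + C * Real.exp (3*μ*t) := by
        have := abs_le.mp h1
        linarith [this.2]
      have hq2E : q2 * Real.exp (2*μ*t) ≤ 0 :=
        mul_nonpos_of_nonpos_of_nonneg (le_of_lt hq2neg) (Real.exp_pos _).le
      have hsplit : Real.exp (3*μ*t) = Real.exp ((3*μ - lam)*t) * Real.exp (lam*t) := by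
        rw [← Real.exp_add]; congr 1; ring
      have h4 : C * Real.exp (3*μ*t) < ε * Real.exp (lam*t) := by
        rw [hsplit, ← mul_assoc]
        exact mul_lt_mul_of_pos_right h2 (Real.exp_pos _)
      linarith
    obtain ⟨T, hT⟩ := eventually_atBot.mp hneg
    refine no_first_zero _
      (fun t => du t - μ * Real.exp (μ*t) - ε * (lam * Real.exp (lam*t))) ?_ T hT ?_
    · intro t
      exact ((hueq t).sub (expD μ t)).sub ((expD lam t).const_mul ε)
    · intro t hbef h0
      show du t - μ * Real.exp (μ*t) - ε * (lam * Real.exp (lam*t)) < 0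
      have hkey := hkey1 t
      have hbt : u (t-τ) - Real.exp (μ*(t-τ)) - ε * Real.exp (lam*(t-τ)) < 0 :=
        hbef _ (by linarith)
      have hE : Real.exp (lam*(t-τ)) = Real.exp (lam*t) * Real.exp (-lam*τ) := by
        rw [← Real.exp_add]; congr 1; ring
      have hχl := hχ lam hlam
      have hL := Real.exp_pos (lam*t)
      have h5 : p * (u (t-τ) - Real.exp (μ*(t-τ)))
          < p * (ε * (Real.exp (lam*t) * Real.exp (-lam*τ))) := by
        apply mul_lt_mul_of_pos_left _ hp0
        rw [← hE]; linarith
      have h6 : p * Real.exp (-lam*τ) * (ε * Real.exp (lam*t))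
          < (lam + 1) * (ε * Real.exp (lam*t)) :=
        mul_lt_mul_of_pos_right hχl (by positivity)
      linarith [h5, h6, hkey, h0]
  -- weak upper bound
  have hwle2 : ∀ t : ℝ, u t - Real.exp (μ*t) ≤ 0 := by
    intro t
    by_contra hc
    push_neg at hc
    set a := u t - Real.exp (μ*t) with ha
    have hL := Real.exp_pos ((3*μ/2)*t)
    have h1 := hwle (a / (2 * Real.exp ((3*μ/2)*t))) (by positivity) t
    have h2 : a / (2 * Real.exp ((3*μ/2)*t)) * Real.exp ((3*μ/2)*t) = a / 2 := by
      field_simp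
    rw [← ha, h2] at h1
    linarith
  -- strict upper bound via W = e^t (u - e^{μt})
  have hWd : ∀ t : ℝ, HasDerivAt (fun s => Real.exp s * (u s - Real.exp (μ*s)))
      (Real.exp t * (u t - Real.exp (μ*t)) + Real.exp t * (du t - μ * Real.exp (μ*t))) t :=
    fun t => (Real.hasDerivAt_exp t).mul ((hueq t).sub (expD μ t))
  have hWanti : StrictAnti (fun s => Real.exp s * (u s - Real.exp (μ*s))) := by
    apply strictAnti_of_deriv_neg
    intro t
    rw [(hWd t).deriv]
    have h1 : p * (u (t-τ) - Real.exp (μ*(t-τ))) ≤ 0 :=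
      mul_nonpos_of_nonneg_of_nonpos hp0.le (hwle2 (t-τ))
    have h2 : (u t - Real.exp (μ*t)) + (du t - μ * Real.exp (μ*t)) < 0 := by
      linarith [hkey1 t]
    nlinarith [Real.exp_pos t]
  have hWlim : Tendsto (fun s => Real.exp s * (u s - Real.exp (μ*s))) atBot (𝓝 0) := by
    have h2 : Tendsto (fun s => u s - Real.exp (μ*s)) atBot (𝓝 (0 - 0)) :=
      hubot.sub (exp0 μ hμ)
    have := Real.tendsto_exp_atBot.mul h2
    simpa using this
  have hupper : ∀ t : ℝ, u t < Real.exp (μ*t) := by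
    intro t
    have h1 : Real.exp t * (u t - Real.exp (μ*t))
        < Real.exp (t-1) * (u (t-1) - Real.exp (μ*(t-1))) := hWanti (by linarith)
    have h2 : Real.exp (t-1) * (u (t-1) - Real.exp (μ*(t-1))) ≤ 0 := by
      refine ge_of_tendsto hWlim ?_
      filter_upwards [eventually_le_atBot (t-1)] with s hs
      exact hWanti.antitone hs
    nlinarith [Real.exp_pos t]
  -- key differential inequality for g = u - e^{μt} - q2 e^{2μt}
  have hkey2 : ∀ t : ℝ,
      (du t - μ * Real.exp (μ*t)) - q2 * (2*μ * Real.exp (2*μ*t))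
      > -(u t - Real.exp (μ*t) - q2 * Real.exp (2*μ*t))
        + p * (u (t-τ) - Real.exp (μ*(t-τ)) - q2 * Real.exp (2*μ*(t-τ)))
        + p * (Real.exp (2*μ*(t-τ)) - u (t-τ)^2) := by
    intro t
    have hE1 : Real.exp (μ*(t-τ)) = Real.exp (μ*t) * Real.exp (-μ*τ) := by
      rw [← Real.exp_add]; congr 1; ring
    have hE2 : Real.exp (2*μ*(t-τ)) = Real.exp (2*μ*t) * Real.exp (-(2*μ)*τ) := by
      rw [← Real.exp_add]; congr 1; ring
    have heq : (du t - μ * Real.exp (μ*t)) - q2 * (2*μ * Real.exp (2*μ*t))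
        + (u t - Real.exp (μ*t) - q2 * Real.exp (2*μ*t))
        - p * (u (t-τ) - Real.exp (μ*(t-τ)) - q2 * Real.exp (2*μ*(t-τ)))
        = p * u (t-τ) * Real.exp (-(u (t-τ))) - p * u (t-τ) + p * Real.exp (2*μ*(t-τ)) := by
      rw [hE1, hE2]
      simp only [hdudef]
      linear_combination Real.exp (μ*t) * hpe - Real.exp (2*μ*t) * hq2chi
    have hne : -(u (t-τ)) ≠ 0 := by
      have := hupos (t-τ); intro hcon; nlinarith
    have hexp := Real.add_one_lt_exp hne
    have hfineq : p * u (t-τ) * Real.exp (-(u (t-τ))) - p * u (t-τ) > -(p * u (t-τ)^2) := by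
      nlinarith [mul_pos hp0 (hupos (t-τ))]
    linarith [heq, hfineq]
  -- square comparison
  have hsq : ∀ t : ℝ, 0 < Real.exp (2*μ*(t-τ)) - u (t-τ)^2 := by
    intro t
    have h1 : Real.exp (2*μ*(t-τ)) = Real.exp (μ*(t-τ)) * Real.exp (μ*(t-τ)) := by
      rw [← Real.exp_add]; congr 1; ring
    have h2 := hupper (t-τ)
    have h3 := hupos (t-τ)
    rw [h1]
    nlinarith
  -- epsilon family: lower bound
  have hgle : ∀ ε : ℝ, 0 < ε → ∀ t : ℝ,
      -(u t - Real.exp (μ*t) - q2 * Real.exp (2*μ*t)) - ε * Real.exp ((5*μ/2)*t) < 0 := by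
    intro ε hε
    set lam := 5*μ/2 with hlamdef
    have hlam : μ < lam := by rw [hlamdef]; linarith
    have ev2 : ∀ᶠ t in atBot, C * Real.exp ((3*μ - lam)*t) < ε := by
      have h0 : Tendsto (fun t => C * Real.exp ((3*μ - lam)*t)) atBot (𝓝 (C * 0)) :=
        (exp0 (3*μ - lam) (by rw [hlamdef]; linarith)).const_mul C
      rw [mul_zero] at h0
      exact h0.eventually_lt_const hε
    have hneg : ∀ᶠ t in atBot,
        -(u t - Real.exp (μ*t) - q2 * Real.exp (2*μ*t)) - ε * Real.exp (lam*t) < 0 := by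
      filter_upwards [hCbd', ev2] with t h1 h2
      have h3 : Real.exp (μ*t) + q2 * Real.exp (2*μ*t) - C * Real.exp (3*μ*t) ≤ u t := by
        have := abs_le.mp h1
        linarith [this.1]
      have hsplit : Real.exp (3*μ*t) = Real.exp ((3*μ - lam)*t) * Real.exp (lam*t) := by
        rw [← Real.exp_add]; congr 1; ring
      have h4 : C * Real.exp (3*μ*t) < ε * Real.exp (lam*t) := by
        rw [hsplit, ← mul_assoc]
        exact mul_lt_mul_of_pos_right h2 (Real.exp_pos _)
      linarith
    obtain ⟨T, hT⟩ := eventually_atBot.mp hneg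
    refine no_first_zero _
      (fun t => -((du t - μ * Real.exp (μ*t)) - q2 * (2*μ * Real.exp (2*μ*t)))
        - ε * (lam * Real.exp (lam*t))) ?_ T hT ?_
    · intro t
      exact ((((hueq t).sub (expD μ t)).sub ((expD (2*μ) t).const_mul q2)).neg).sub
        ((expD lam t).const_mul ε)
    · intro t hbef h0
      show -((du t - μ * Real.exp (μ*t)) - q2 * (2*μ * Real.exp (2*μ*t)))
        - ε * (lam * Real.exp (lam*t)) < 0
      have hkey := hkey2 t
      have hbt := hbef (t-τ) (by linarith)
      have hE : Real.exp (lam*(t-τ)) = Real.exp (lam*t) * Real.exp (-lam*τ) := by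
        rw [← Real.exp_add]; congr 1; ring
      have hχl := hχ lam hlam
      have hL := Real.exp_pos (lam*t)
      have h5 : p * (u (t-τ) - Real.exp (μ*(t-τ)) - q2 * Real.exp (2*μ*(t-τ)))
          > p * (-(ε * (Real.exp (lam*t) * Real.exp (-lam*τ)))) := by
        apply mul_lt_mul_of_pos_left _ hp0
        rw [← hE]; linarith
      have h6 : p * Real.exp (-lam*τ) * (ε * Real.exp (lam*t))
          < (lam + 1) * (ε * Real.exp (lam*t)) :=
        mul_lt_mul_of_pos_right hχl (by positivity)
      have h7 := hsq t
      linarith [h5, h6, hkey, h0, h7, mul_pos hp0 h7]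
  -- weak lower bound
  have hgle2 : ∀ t : ℝ, 0 ≤ u t - Real.exp (μ*t) - q2 * Real.exp (2*μ*t) := by
    intro t
    by_contra hc
    push_neg at hc
    set a := -(u t - Real.exp (μ*t) - q2 * Real.exp (2*μ*t)) with ha
    have hca : 0 < a := by rw [ha]; linarith
    have hL := Real.exp_pos ((5*μ/2)*t)
    have h1 := hgle (a / (2 * Real.exp ((5*μ/2)*t))) (by positivity) t
    have h2 : a / (2 * Real.exp ((5*μ/2)*t)) * Real.exp ((5*μ/2)*t) = a / 2 := by
      field_simp
    rw [← ha, h2] at h1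
    linarith
  -- strict lower bound via G = e^t * g
  have hGd : ∀ t : ℝ, HasDerivAt
      (fun s => Real.exp s * (u s - Real.exp (μ*s) - q2 * Real.exp (2*μ*s)))
      (Real.exp t * (u t - Real.exp (μ*t) - q2 * Real.exp (2*μ*t))
        + Real.exp t * ((du t - μ * Real.exp (μ*t)) - q2 * (2*μ * Real.exp (2*μ*t)))) t :=
    fun t => (Real.hasDerivAt_exp t).mul
      (((hueq t).sub (expD μ t)).sub ((expD (2*μ) t).const_mul q2))
  have hGmono : StrictMono
      (fun s => Real.exp s * (u s - Real.exp (μ*s) - q2 * Real.exp (2*μ*s))) := by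
    apply strictMono_of_deriv_pos
    intro t
    rw [(hGd t).deriv]
    have h1 : 0 ≤ p * (u (t-τ) - Real.exp (μ*(t-τ)) - q2 * Real.exp (2*μ*(t-τ))) :=
      mul_nonneg hp0.le (hgle2 (t-τ))
    have h2 : 0 < (u t - Real.exp (μ*t) - q2 * Real.exp (2*μ*t))
        + ((du t - μ * Real.exp (μ*t)) - q2 * (2*μ * Real.exp (2*μ*t))) := by
      have := hkey2 t
      have h3 := mul_pos hp0 (hsq t)
      linarith
    nlinarith [Real.exp_pos t]
  have hGlim : Tendsto
      (fun s => Real.exp s * (u s - Real.exp (μ*s) - q2 * Real.exp (2*μ*s))) atBot (𝓝 0) := by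
    have h2 : Tendsto (fun s => u s - Real.exp (μ*s) - q2 * Real.exp (2*μ*s))
        atBot (𝓝 (0 - 0 - q2 * 0)) :=
      (hubot.sub (exp0 μ hμ)).sub ((exp0 (2*μ) (by linarith)).const_mul q2)
    have := Real.tendsto_exp_atBot.mul h2
    simpa using this
  have hlower : ∀ t : ℝ, Real.exp (μ*t) + q2 * Real.exp (2*μ*t) < u t := by
    intro t
    have h1 : Real.exp (t-1) * (u (t-1) - Real.exp (μ*(t-1)) - q2 * Real.exp (2*μ*(t-1)))
        < Real.exp t * (u t - Real.exp (μ*t) - q2 * Real.exp (2*μ*t)) :=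
      hGmono (by linarith)
    have h2 : 0 ≤ Real.exp (t-1) * (u (t-1) - Real.exp (μ*(t-1)) - q2 * Real.exp (2*μ*(t-1))) := by
      refine le_of_tendsto hGlim ?_
      filter_upwards [eventually_le_atBot (t-1)] with s hs
      exact hGmono.monotone hs
    nlinarith [Real.exp_pos t]
  exact ⟨fun t _ => ⟨hlower t, hupper t⟩, hupper⟩
end

section
/- Let p > e² and τ > 0 satisfy (ln p − 1)τ e^{1+τ} < 1 and pτ e^{τ−1} > 1 (the necessary conditions for existence of an nm-wave), let μ > 0 be the unique positive root of z + 1 − p e^{−zτ}, and let q̄₂ = −p e^{−2μτ}/χ(2μ) with χ(z) = z + 1 − p e^{−zτ}. Then e^{−μτ} < 1/2 (indeed e^{−μτ} < e^{−1+τ*} where τ* solves τ e^{1+τ} = 1) and −1 < q̄₂ < 0. -/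
open Real Filter Set

set_option maxHeartbeats 1000000 in
/-- under the necessary conditions for the existence of an nm-wave,
`e^{-μτ} < e^{-1+τ*} < 1/2` and `-1 < q̄₂ < 0`. -/
theorem stmt_7 (p τ μ q2 τstar : ℝ)
    (hp : Real.exp 2 < p) (hτ : 0 < τ)
    (h1 : (Real.log p - 1) * τ * Real.exp (1 + τ) < 1)
    (h2 : 1 < p * τ * Real.exp (τ - 1))
    (hμ : 0 < μ) (hμroot : μ + 1 - p * Real.exp (-μ*τ) = 0)
    (hq2 : q2 = -p * Real.exp (-(2*μ)*τ) / (2*μ + 1 - p * Real.exp (-(2*μ)*τ)))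
    (hτs : 0 < τstar) (hτsroot : τstar * Real.exp (1 + τstar) = 1) :
    Real.exp (-μ*τ) < Real.exp (-1 + τstar) ∧
    Real.exp (-μ*τ) < 1/2 ∧
    -1 < q2 ∧ q2 < 0 := by
  have hppos : 0 < p := lt_trans (Real.exp_pos 2) hp
  have hE : p * Real.exp (-μ*τ) = μ + 1 := by linarith
  have hlogp : (2:ℝ) < Real.log p := (Real.lt_log_iff_exp_lt hppos).mpr hp
  have hlog2 : Real.log 2 < 0.6931472 := lt_trans Real.log_two_lt_d9 (by norm_num)
  have hlog2' : (0:ℝ) < Real.log 2 := Real.log_pos (by norm_num)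
  have he1 : (2.7182818283:ℝ) < Real.exp 1 := Real.exp_one_gt_d9
  -- Step A : τ < τstar
  have hττ : τ < τstar := by
    by_contra h
    push_neg at h
    have h3 : τ * Real.exp (1+τ) < 1 := by
      nlinarith [mul_pos hτ (Real.exp_pos (1+τ))]
    have h4 : Real.exp (1+τstar) ≤ Real.exp (1+τ) :=
      Real.exp_le_exp.mpr (by linarith)
    nlinarith [Real.exp_pos (1+τstar)]
  -- Step C : τstar < 1 - log 2
  have hτs2 : τstar < 1 - Real.log 2 := by
    by_contra h
    push_neg at h
    have h4 : Real.exp (1 + (1 - Real.log 2)) ≤ Real.exp (1+τstar) :=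
      Real.exp_le_exp.mpr (by linarith)
    have h5 : Real.exp (1 + (1 - Real.log 2)) = Real.exp 1 * Real.exp 1 / 2 := by
      rw [show (1:ℝ) + (1 - Real.log 2) = 1 + 1 - Real.log 2 by ring,
        Real.exp_sub, Real.exp_add, Real.exp_log (by norm_num : (0:ℝ) < 2)]
    nlinarith [Real.exp_pos (1+τstar), Real.exp_pos 1]
  -- key identity : (μτ + τ) e^{μτ} = p τ
  have h6 : Real.exp (-μ*τ) * Real.exp (μ*τ) = 1 := by
    rw [← Real.exp_add]; norm_num
  have hx : (μ*τ + τ) * Real.exp (μ*τ) = p * τ := by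
    linear_combination p*τ*h6 - τ*(Real.exp (μ*τ))*hE
  -- p τ > e^{1-τ}
  have h7 : Real.exp (1-τ) * Real.exp (τ-1) = 1 := by
    rw [← Real.exp_add]; norm_num
  have hpτ : Real.exp (1 - τ) < p * τ := by
    have A := mul_lt_mul_of_pos_right h2 (Real.exp_pos (1-τ))
    have B : p * τ * Real.exp (τ-1) * Real.exp (1-τ) = p * τ := by
      linear_combination p * τ * h7
    linarith
  -- Step B : μτ > 1 - τstar
  have hμτ : 1 - τstar < μ * τ := by
    by_contra h
    push_neg at h
    have hx0 : (0:ℝ) < 1 - τstar := by linarith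
    have e1 : Real.exp (μ*τ) ≤ Real.exp (1 - τstar) := Real.exp_le_exp.mpr h
    have e2 : (μ*τ + τ) * Real.exp (μ*τ) ≤ (1 - τstar + τ) * Real.exp (1 - τstar) :=
      mul_le_mul (by linarith) e1 (le_of_lt (Real.exp_pos _))
        (by nlinarith [mul_pos hμ hτ])
    have e3 : (1 - τstar + τ) * Real.exp (1 - τstar) < Real.exp (1 - τ) := by
      have e4 : Real.exp (1 - τstar) < Real.exp (1 - τ) :=
        Real.exp_lt_exp.mpr (by linarith)
      nlinarith [Real.exp_pos (1 - τstar)]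
    linarith
  -- first goal
  have g1 : Real.exp (-μ*τ) < Real.exp (-1 + τstar) :=
    Real.exp_lt_exp.mpr (by linarith)
  -- second goal
  have hhalf : Real.exp (-Real.log 2) = 1/2 := by
    rw [Real.exp_neg, Real.exp_log (by norm_num : (0:ℝ) < 2)]; norm_num
  have g2 : Real.exp (-μ*τ) < 1/2 := by
    have : Real.exp (-1 + τstar) < Real.exp (-Real.log 2) :=
      Real.exp_lt_exp.mpr (by linarith)
    linarith [hhalf ▸ this]
  -- q2 goals
  have hsq : Real.exp (-(2*μ)*τ) = Real.exp (-μ*τ) * Real.exp (-μ*τ) := by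
    rw [← Real.exp_add]; ring_nf
  have hEpos : 0 < Real.exp (-μ*τ) := Real.exp_pos _
  have hNum : p * Real.exp (-(2*μ)*τ) = (μ+1) * Real.exp (-μ*τ) := by
    rw [hsq]; linear_combination Real.exp (-μ*τ) * hE
  have hD : 0 < 2*μ + 1 - p * Real.exp (-(2*μ)*τ) := by
    rw [hNum]
    nlinarith [mul_pos (show (0:ℝ) < μ+1 by linarith) (show 0 < 1/2 - Real.exp (-μ*τ) by linarith)]
  have hNum' : -p * Real.exp (-(2*μ)*τ) = -((μ+1) * Real.exp (-μ*τ)) := by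
    linear_combination -hNum
  have g4 : q2 < 0 := by
    have hnum : -((μ+1) * Real.exp (-μ*τ)) < 0 := by
      nlinarith [mul_pos (show (0:ℝ) < μ+1 by linarith) hEpos]
    rw [hq2, hNum']
    exact div_neg_of_neg_of_pos hnum hD
  have g3 : -1 < q2 := by
    rw [hq2, hNum', lt_div_iff₀ hD, hNum]
    nlinarith [mul_pos (show (0:ℝ) < μ+1 by linarith) (show 0 < 1/2 - Real.exp (-μ*τ) by linarith)]
  exact ⟨g1, g2, g3, g4⟩
end

section
/- Fix P > 1 and c > 0, and set λ = c(c − √(c²+4))/2 < 0 and ν = c(c + √(c²+4))/2 > 0. Then the equation Φ(τ,c) := (ν − λ)/(ν e^{−λτ} − λ e^{−ντ}) = 1 − 1/P has a unique positive root τ = τ(c). The function c ↦ τ(c) is smooth on (0, +∞) and converges, as c → +∞, to the finite positive limit τ̂ = ln(P/(P−1)). -/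
open Real Filter Set
open Topology

/-- `λ = c(c - √(c²+4))/2`, the negative root of `c⁻²z² - z - 1 = 0`. -/
noncomputable def lam (c : ℝ) : ℝ := c * (c - Real.sqrt (c^2 + 4)) / 2

/-- `ν = c(c + √(c²+4))/2`, the positive root of `c⁻²z² - z - 1 = 0`. -/
noncomputable def nu (c : ℝ) : ℝ := c * (c + Real.sqrt (c^2 + 4)) / 2

/-- `Φ(τ,c) = (ν - λ)/(ν e^{-λτ} - λ e^{-ντ})`. -/
noncomputable def Phi (τ c : ℝ) : ℝ :=
  (nu c - lam c) / (nu c * Real.exp (-(lam c) * τ) - lam c * Real.exp (-(nu c) * τ))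

noncomputable def Dfun (c τ : ℝ) : ℝ :=
  nu c * Real.exp (-(lam c) * τ) - lam c * Real.exp (-(nu c) * τ)

lemma Phi_eq (τ c : ℝ) : Phi τ c = (nu c - lam c) / Dfun c τ := rfl

lemma sqrt_gt {c : ℝ} (hc : 0 < c) : c < Real.sqrt (c^2 + 4) := by
  rw [show c^2 + 4 = c^2 + 4 by ring] at *
  have : c < Real.sqrt (c^2 + 4) ↔ c^2 < c^2 + 4 := Real.lt_sqrt hc.le
  rw [this]; nlinarith

lemma sq_sqrt4 (c : ℝ) : Real.sqrt (c^2 + 4) ^ 2 = c^2 + 4 :=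
  Real.sq_sqrt (by positivity)

lemma lam_neg {c : ℝ} (hc : 0 < c) : lam c < 0 := by
  have h := sqrt_gt hc
  unfold lam; nlinarith

lemma nu_pos {c : ℝ} (hc : 0 < c) : 0 < nu c := by
  have h := sqrt_gt hc
  unfold nu; nlinarith

lemma lam_lt_nu {c : ℝ} (hc : 0 < c) : lam c < nu c := (lam_neg hc).trans (nu_pos hc)

lemma lam_mul_nu (c : ℝ) : lam c * nu c = -c^2 := by
  have h := sq_sqrt4 c
  unfold lam nu; nlinarith [sq_nonneg (Real.sqrt (c^2+4))]

lemma Dfun_pos {c : ℝ} (hc : 0 < c) (τ : ℝ) : 0 < Dfun c τ := by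
  have h1 : 0 < nu c * Real.exp (-(lam c) * τ) := mul_pos (nu_pos hc) (Real.exp_pos _)
  have h2 : 0 < (-(lam c)) * Real.exp (-(nu c) * τ) :=
    mul_pos (by linarith [lam_neg hc]) (Real.exp_pos _)
  unfold Dfun; nlinarith

lemma hasDerivAt_Dfun (c τ : ℝ) :
    HasDerivAt (Dfun c) (lam c * nu c * (Real.exp (-(nu c) * τ) - Real.exp (-(lam c) * τ))) τ := by
  have h1 : HasDerivAt (fun t : ℝ => Real.exp (-(lam c) * t)) (-(lam c) * Real.exp (-(lam c) * τ)) τ := by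
    simpa [mul_comm] using ((hasDerivAt_id τ).const_mul (-(lam c))).exp
  have h2 : HasDerivAt (fun t : ℝ => Real.exp (-(nu c) * t)) (-(nu c) * Real.exp (-(nu c) * τ)) τ := by
    simpa [mul_comm] using ((hasDerivAt_id τ).const_mul (-(nu c))).exp
  have := (h1.const_mul (nu c)).sub (h2.const_mul (lam c))
  exact this.congr_deriv (by ring)

lemma continuous_Dfun (c : ℝ) : Continuous (Dfun c) := by
  unfold Dfun; fun_prop

lemma Dfun_strictMonoOn {c : ℝ} (hc : 0 < c) : StrictMonoOn (Dfun c) (Ici 0) := by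
  apply strictMonoOn_of_deriv_pos (convex_Ici 0) (continuous_Dfun c).continuousOn
  intro τ hτ
  rw [interior_Ici] at hτ
  rw [(hasDerivAt_Dfun c τ).deriv]
  have h1 : lam c * nu c = -c^2 := lam_mul_nu c
  have h2 : Real.exp (-(nu c) * τ) < Real.exp (-(lam c) * τ) := by
    apply Real.exp_lt_exp.2
    have := lam_lt_nu hc
    nlinarith [mem_Ioi.1 hτ]
  have h3 : lam c * nu c < 0 := by rw [h1]; nlinarith
  exact mul_pos_of_neg_of_neg h3 (by linarith)

lemma Dfun_zero (c : ℝ) : Dfun c 0 = nu c - lam c := by simp [Dfun]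

lemma phi_eq_iff {P c : ℝ} (hP : 1 < P) (hc : 0 < c) (τ : ℝ) :
    Phi τ c = 1 - 1/P ↔ Dfun c τ = (nu c - lam c) * (P/(P-1)) := by
  have hD := Dfun_pos hc τ
  have hP0 : (0:ℝ) < P := by linarith
  have hP1 : (0:ℝ) < P - 1 := by linarith
  rw [Phi_eq, div_eq_iff hD.ne']
  constructor
  · intro h
    field_simp at h ⊢
    nlinarith [h]
  · intro h
    rw [h]; field_simp

lemma tendsto_Dfun_atTop {c : ℝ} (hc : 0 < c) : Tendsto (Dfun c) atTop atTop := by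
  have h1 : Tendsto (fun τ : ℝ => nu c * Real.exp (-(lam c) * τ)) atTop atTop := by
    apply Tendsto.const_mul_atTop (nu_pos hc)
    exact Real.tendsto_exp_atTop.comp (tendsto_id.const_mul_atTop (by linarith [lam_neg hc]))
  apply tendsto_atTop_mono _ h1
  intro τ
  have h2 : 0 < (-(lam c)) * Real.exp (-(nu c) * τ) :=
    mul_pos (by linarith [lam_neg hc]) (Real.exp_pos _)
  unfold Dfun; nlinarith

lemma exists_unique_root {P c : ℝ} (hP : 1 < P) (hc : 0 < c) :
    ∃! τ : ℝ, 0 < τ ∧ Phi τ c = 1 - 1/P := by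
  set K := (nu c - lam c) * (P/(P-1)) with hKdef
  have hnl : 0 < nu c - lam c := by linarith [lam_lt_nu hc]
  have hPP : 1 < P/(P-1) := by
    rw [lt_div_iff₀ (by linarith)]; linarith
  have hK0 : Dfun c 0 < K := by
    rw [Dfun_zero]; nlinarith
  obtain ⟨T, hT0, hTK⟩ : ∃ T : ℝ, 0 < T ∧ K < Dfun c T := by
    have := (tendsto_Dfun_atTop hc).eventually_gt_atTop K
    obtain ⟨T, hT1, hT2⟩ := (this.and (eventually_gt_atTop 0)).exists
    exact ⟨T, hT2, hT1⟩
  obtain ⟨τ, hτmem, hτK⟩ : ∃ τ ∈ Ioo (0:ℝ) T, Dfun c τ = K := by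
    have := intermediate_value_Ioo hT0.le (continuous_Dfun c).continuousOn
      (show K ∈ Ioo (Dfun c 0) (Dfun c T) from ⟨hK0, hTK⟩)
    obtain ⟨τ, hτ, hτK⟩ := this
    exact ⟨τ, hτ, hτK⟩
  refine ⟨τ, ⟨hτmem.1, (phi_eq_iff hP hc τ).2 hτK⟩, ?_⟩
  rintro y ⟨hy0, hyP⟩
  have hyK : Dfun c y = K := (phi_eq_iff hP hc y).1 hyP
  exact (Dfun_strictMonoOn hc).injOn hy0.le hτmem.1.le (by rw [hyK, hτK])

lemma contDiffAt_s (c : ℝ) : ContDiffAt ℝ (⊤ : ℕ∞) (fun x : ℝ => Real.sqrt (x^2 + 4)) c :=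
  ContDiffAt.sqrt ((contDiff_id.pow 2).add contDiff_const).contDiffAt (by positivity)

lemma contDiff_lam : ContDiff ℝ (⊤ : ℕ∞) lam := by
  rw [contDiff_iff_contDiffAt]
  intro c
  exact (contDiffAt_id.mul (contDiffAt_id.sub (contDiffAt_s c))).div_const 2

lemma contDiff_nu : ContDiff ℝ (⊤ : ℕ∞) nu := by
  rw [contDiff_iff_contDiffAt]
  intro c
  exact (contDiffAt_id.mul (contDiffAt_id.add (contDiffAt_s c))).div_const 2

noncomputable def Fp (P : ℝ) (p : ℝ × ℝ) : ℝ :=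
  nu p.2 * Real.exp (-(lam p.2) * p.1) - lam p.2 * Real.exp (-(nu p.2) * p.1)
    - (nu p.2 - lam p.2) * (P/(P-1))

lemma Fp_eq (P τ c : ℝ) : Fp P (τ, c) = Dfun c τ - (nu c - lam c) * (P/(P-1)) := rfl

lemma contDiff_Fp (P : ℝ) : ContDiff ℝ (⊤ : ℕ∞) (Fp P) := by
  have hl : ContDiff ℝ (⊤ : ℕ∞) (fun p : ℝ × ℝ => lam p.2) := contDiff_lam.comp contDiff_snd
  have hn : ContDiff ℝ (⊤ : ℕ∞) (fun p : ℝ × ℝ => nu p.2) := contDiff_nu.comp contDiff_snd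
  have h1 : ContDiff ℝ (⊤ : ℕ∞) (fun p : ℝ × ℝ => Real.exp (-(lam p.2) * p.1)) :=
    Real.contDiff_exp.comp (hl.neg.mul contDiff_fst)
  have h2 : ContDiff ℝ (⊤ : ℕ∞) (fun p : ℝ × ℝ => Real.exp (-(nu p.2) * p.1)) :=
    Real.contDiff_exp.comp (hn.neg.mul contDiff_fst)
  exact ((hn.mul h1).sub (hl.mul h2)).sub ((hn.sub hl).mul contDiff_const)

lemma contDiffAt_root (P : ℝ) (hP : 1 < P) (f : ℝ → ℝ)
    (hf : ∀ c : ℝ, 0 < c → 0 < f c ∧ Phi (f c) c = 1 - 1/P)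
    {c₀ : ℝ} (hc₀ : 0 < c₀) : ContDiffAt ℝ (⊤ : ℕ∞) f c₀ := by
  obtain ⟨hτ₀, hphi₀⟩ := hf c₀ hc₀
  set τ₀ := f c₀ with hτ₀def
  set p₀ : ℝ × ℝ := (τ₀, c₀) with hp₀def
  have hroot : Fp P p₀ = 0 := by
    rw [hp₀def, Fp_eq, (phi_eq_iff hP hc₀ τ₀).1 hphi₀]; ring
  set G : ℝ × ℝ → ℝ × ℝ := fun p => (Fp P p, p.2) with hGdef
  have hGc : ContDiff ℝ (⊤ : ℕ∞) G := (contDiff_Fp P).prodMk contDiff_snd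
  set A : ℝ × ℝ →L[ℝ] ℝ := fderiv ℝ (Fp P) p₀ with hAdef
  have hA : HasFDerivAt (Fp P) A p₀ :=
    (((contDiff_Fp P).differentiable (by simp)) p₀).hasFDerivAt
  set a : ℝ := A (1, 0) with hadef
  set b : ℝ := A (0, 1) with hbdef
  -- the partial derivative in τ is positive
  have ha_pos : 0 < a := by
    have hcurve : HasDerivAt (fun τ : ℝ => ((τ, c₀) : ℝ × ℝ)) ((1:ℝ), (0:ℝ)) τ₀ :=
      (hasDerivAt_id τ₀).prodMk (hasDerivAt_const τ₀ c₀)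
    have hcomp : HasDerivAt (fun τ : ℝ => Fp P (τ, c₀)) (A (1, 0)) τ₀ :=
      (hA.comp_hasDerivAt τ₀ hcurve :)
    have hD : HasDerivAt (fun τ : ℝ => Fp P (τ, c₀))
        (lam c₀ * nu c₀ * (Real.exp (-(nu c₀) * τ₀) - Real.exp (-(lam c₀) * τ₀))) τ₀ := by
      simpa [Fp_eq] using (hasDerivAt_Dfun c₀ τ₀).sub_const ((nu c₀ - lam c₀) * (P/(P-1)))
    have haval : a = lam c₀ * nu c₀ * (Real.exp (-(nu c₀) * τ₀) - Real.exp (-(lam c₀) * τ₀)) :=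
      hcomp.unique hD
    rw [haval]
    have h1 := lam_mul_nu c₀
    have h3 : lam c₀ * nu c₀ < 0 := by rw [h1]; nlinarith
    have h2 : Real.exp (-(nu c₀) * τ₀) < Real.exp (-(lam c₀) * τ₀) := by
      apply Real.exp_lt_exp.2
      have := lam_lt_nu hc₀
      nlinarith
    exact mul_pos_of_neg_of_neg h3 (by linarith)
  have hA_apply : ∀ v : ℝ × ℝ, A v = v.1 * a + v.2 * b := by
    intro v
    have hv : v = v.1 • ((1:ℝ), (0:ℝ)) + v.2 • ((0:ℝ), (1:ℝ)) := by
      ext <;> simp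
    calc A v = A (v.1 • ((1:ℝ), (0:ℝ)) + v.2 • ((0:ℝ), (1:ℝ))) := by rw [← hv]
    _ = v.1 * a + v.2 * b := by
      rw [map_add, map_smul, map_smul]; simp [smul_eq_mul, hadef, hbdef]
  set B : ℝ × ℝ →L[ℝ] ℝ × ℝ :=
    (a⁻¹ • (ContinuousLinearMap.fst ℝ ℝ ℝ - b • ContinuousLinearMap.snd ℝ ℝ ℝ)).prod
      (ContinuousLinearMap.snd ℝ ℝ ℝ) with hBdef
  have hB_apply : ∀ w : ℝ × ℝ, B w = (a⁻¹ * (w.1 - b * w.2), w.2) := by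
    intro w
    simp [hBdef, ContinuousLinearMap.prod_apply, smul_eq_mul]
  set A' : ℝ × ℝ →L[ℝ] ℝ × ℝ := A.prod (ContinuousLinearMap.snd ℝ ℝ ℝ) with hA'def
  have hA'_apply : ∀ v : ℝ × ℝ, A' v = (A v, v.2) := fun v => rfl
  have hA' : HasFDerivAt G A' p₀ := hA.prodMk hasFDerivAt_snd
  set e : (ℝ × ℝ) ≃L[ℝ] ℝ × ℝ := ContinuousLinearEquiv.equivOfInverse A' B
    (by
      intro v
      rw [hA'_apply, hB_apply]
      have := hA_apply v
      ext
      · simp only []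
        rw [this]
        field_simp
        ring
      · rfl)
    (by
      intro w
      rw [hB_apply, hA'_apply]
      ext
      · simp only []
        rw [hA_apply]
        field_simp
        ring
      · rfl) with hedef
  have hcoe : (e : ℝ × ℝ →L[ℝ] ℝ × ℝ) = A' := rfl
  have hG' : HasFDerivAt G (e : ℝ × ℝ →L[ℝ] ℝ × ℝ) p₀ := by rw [hcoe]; exact hA'
  have hGat : ContDiffAt ℝ (⊤ : ℕ∞) G p₀ := hGc.contDiffAt
  set inv := hGat.localInverse hG' (by simp) with hinvdef
  have hinv : ContDiffAt ℝ (⊤ : ℕ∞) inv (G p₀) := hGat.to_localInverse hG' (by simp)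
  have himage : inv (G p₀) = p₀ := hGat.localInverse_apply_image hG' (by simp)
  have hri : ∀ᶠ y in 𝓝 (G p₀), G (inv y) = y :=
    (hGat.hasStrictFDerivAt' hG' (by simp)).eventually_right_inverse
  have hGp₀ : G p₀ = ((0:ℝ), c₀) := by
    rw [hGdef]; simp [hroot]; rfl
  set g : ℝ → ℝ := fun c => (inv ((0:ℝ), c)).1 with hgdef
  have hemb : ContDiffAt ℝ (⊤ : ℕ∞) (fun c : ℝ => (((0:ℝ), c) : ℝ × ℝ)) c₀ :=
    (contDiff_const.prodMk contDiff_id).contDiffAt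
  have hinv' : ContDiffAt ℝ (⊤ : ℕ∞) inv ((0:ℝ), c₀) := by rw [← hGp₀]; exact hinv
  have hgcd : ContDiffAt ℝ (⊤ : ℕ∞) g c₀ := by
    have h1 : ContDiffAt ℝ (⊤ : ℕ∞) (fun c : ℝ => inv ((0:ℝ), c)) c₀ := hinv'.comp c₀ hemb
    exact contDiff_fst.contDiffAt.comp c₀ h1
  have hev1 : ∀ᶠ c in 𝓝 c₀, G (inv ((0:ℝ), c)) = ((0:ℝ), c) := by
    have hcont : Tendsto (fun c : ℝ => (((0:ℝ), c) : ℝ × ℝ)) (𝓝 c₀) (𝓝 (G p₀)) := by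
      rw [hGp₀]
      exact (continuous_const.prodMk continuous_id).tendsto c₀
    exact hcont.eventually hri
  have hg0 : g c₀ = τ₀ := by
    rw [hgdef]
    simp only []
    rw [← hGp₀, himage]
  have hev2 : ∀ᶠ c in 𝓝 c₀, 0 < g c := by
    have hgc : ContinuousAt g c₀ := hgcd.continuousAt
    exact hgc (Ioi_mem_nhds (by rw [hg0]; exact hτ₀))
  have hev3 : ∀ᶠ c in 𝓝 c₀, 0 < c := Ioi_mem_nhds hc₀
  have heq : f =ᶠ[𝓝 c₀] g := by
    filter_upwards [hev1, hev2, hev3] with c h1 h2 h3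
    have hsnd : (inv ((0:ℝ), c)).2 = c := congrArg Prod.snd h1
    have hfst : Fp P (inv ((0:ℝ), c)) = 0 := congrArg Prod.fst h1
    have hx : inv ((0:ℝ), c) = (g c, c) := by
      ext
      · rfl
      · exact hsnd
    rw [hx] at hfst
    have hphi : Phi (g c) c = 1 - 1/P := by
      apply (phi_eq_iff hP h3 _).2
      rw [Fp_eq] at hfst
      linarith
    exact ((exists_unique_root hP h3).unique ⟨(hf c h3).1, (hf c h3).2⟩ ⟨h2, hphi⟩)
  exact hgcd.congr_of_eventuallyEq heq

lemma sqrt_div_c {c : ℝ} (hc : 0 < c) :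
    Real.sqrt (c^2 + 4) / c = Real.sqrt (1 + 4/c^2) := by
  rw [show (1 : ℝ) + 4/c^2 = (c^2+4)/c^2 by field_simp,
    Real.sqrt_div (by positivity) _, Real.sqrt_sq hc.le]

lemma lam_formula {c : ℝ} (hc : 0 < c) : lam c = -2 / (1 + Real.sqrt (1 + 4/c^2)) := by
  have hs2 := sq_sqrt4 c
  have hs : 0 < Real.sqrt (c^2+4) := Real.sqrt_pos.2 (by positivity)
  rw [← sqrt_div_c hc]
  rw [lam]
  have hcs : 0 < c + Real.sqrt (c^2+4) := by linarith
  field_simp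
  nlinarith [hs2]

lemma tendsto_inner : Tendsto (fun c : ℝ => 1 + Real.sqrt (1 + 4/c^2)) atTop (𝓝 2) := by
  have h1 : Tendsto (fun c : ℝ => 4/c^2) atTop (𝓝 0) :=
    tendsto_const_nhds.div_atTop (tendsto_pow_atTop two_ne_zero)
  have h2 : Tendsto (fun c : ℝ => (1:ℝ) + 4/c^2) atTop (𝓝 1) := by
    simpa using tendsto_const_nhds.add h1
  have h3 : Tendsto (fun c : ℝ => Real.sqrt (1 + 4/c^2)) atTop (𝓝 1) := by
    have := (Real.continuous_sqrt.tendsto 1).comp h2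
    simpa [Function.comp_def] using this
  have h4 := (tendsto_const_nhds (x := (1:ℝ)) (f := atTop)).add h3
  norm_num at h4 ⊢
  exact h4

lemma tendsto_lam : Tendsto lam atTop (𝓝 (-1)) := by
  have h := (tendsto_const_nhds (x := (-2:ℝ)) (f := atTop)).div tendsto_inner (by norm_num : (2:ℝ) ≠ 0)
  have h' : Tendsto (fun c : ℝ => -2 / (1 + Real.sqrt (1 + 4/c^2))) atTop (𝓝 (-1)) := by
    convert h using 2 <;> norm_num
  apply h'.congr'
  filter_upwards [eventually_gt_atTop 0] with c hc
  exact (lam_formula hc).symm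

lemma tendsto_nu : Tendsto nu atTop atTop := by
  apply tendsto_atTop_mono' atTop (_ : ∀ᶠ c in atTop, c ≤ nu c) tendsto_id
  filter_upwards [eventually_gt_atTop 0] with c hc
  have hs : (2:ℝ) ≤ Real.sqrt (c^2+4) := by
    rw [show (2:ℝ) = Real.sqrt 4 by rw [show (4:ℝ) = 2^2 by norm_num, Real.sqrt_sq]; norm_num]
    exact Real.sqrt_le_sqrt (by nlinarith)
  unfold nu; nlinarith

lemma tendsto_ratio : Tendsto (fun c => lam c / nu c) atTop (𝓝 0) := by
  have hbase : Tendsto (fun c : ℝ => c + Real.sqrt (c^2+4)) atTop atTop :=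
    tendsto_id.atTop_add_nonneg (fun c => Real.sqrt_nonneg _)
  have hsq : Tendsto (fun c : ℝ => (c + Real.sqrt (c^2+4))^2) atTop atTop := by
    have := hbase.atTop_mul_atTop₀ hbase
    apply this.congr
    intro c; ring
  have h := (tendsto_const_nhds (x := (-4:ℝ))).div_atTop hsq
  apply h.congr'
  filter_upwards [eventually_gt_atTop 0] with c hc
  have hs2 := sq_sqrt4 c
  have hs : 0 < Real.sqrt (c^2+4) := Real.sqrt_pos.2 (by positivity)
  have hl := lam_neg hc
  have hn := nu_pos hc
  have hcs : 0 < c + Real.sqrt (c^2+4) := by linarith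
  rw [lam, nu]
  field_simp
  nlinarith [hs2]

lemma Fp_div_nu {P t c : ℝ} (hc : 0 < c) :
    Fp P (t, c) / nu c = Real.exp (-(lam c) * t) - (lam c / nu c) * Real.exp (-(nu c) * t)
      - (1 - lam c / nu c) * (P/(P-1)) := by
  have hn := (nu_pos hc).ne'
  rw [Fp]
  generalize (P/(P-1)) = q
  field_simp

set_option maxHeartbeats 1000000 in
lemma tendsto_Fquot (P t : ℝ) (ht : 0 < t) :
    Tendsto (fun c => Fp P (t, c) / nu c) atTop (𝓝 (Real.exp t - P/(P-1))) := by
  have h1 : Tendsto (fun c => Real.exp (-(lam c) * t)) atTop (𝓝 (Real.exp t)) := by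
    have hlim : Tendsto (fun c => -(lam c) * t) atTop (𝓝 t) := by
      have := (tendsto_lam.neg).mul_const t
      simpa using this
    exact (Real.continuous_exp.tendsto t).comp hlim
  have h2 : Tendsto (fun c => Real.exp (-(nu c) * t)) atTop (𝓝 0) := by
    apply Real.tendsto_exp_atBot.comp
    have : Tendsto (fun c => nu c * t) atTop atTop := tendsto_nu.atTop_mul_const ht
    have := tendsto_neg_atTop_atBot.comp this
    apply this.congr
    intro c
    simp [Function.comp]
    try ring
  have h3 : Tendsto (fun c => (lam c / nu c) * Real.exp (-(nu c) * t)) atTop (𝓝 0) := by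
    have := tendsto_ratio.mul h2
    simpa using this
  have h4 : Tendsto (fun c => (1 - lam c / nu c) * (P/(P-1))) atTop (𝓝 (P/(P-1))) := by
    have := ((tendsto_const_nhds (x := (1:ℝ)) (f := atTop)).sub tendsto_ratio).mul_const (P/(P-1))
    simpa using this
  have h8 := (h1.sub h3).sub h4
  rw [sub_zero] at h8
  refine Tendsto.congr' ?_ h8
  filter_upwards [eventually_gt_atTop 0] with c hc
  exact (Fp_div_nu hc).symm

/-- for every `c > 0` the equation `Φ(τ,c) = 1 - 1/P` has a unique positive
root `τ(c)`; the root function is smooth on `(0,∞)` and tends to `ln(P/(P-1))` as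
`c → +∞`. -/
theorem stmt_13 (P : ℝ) (hP : 1 < P) :
    (∀ c : ℝ, 0 < c → ∃! τ : ℝ, 0 < τ ∧ Phi τ c = 1 - 1/P) ∧
    (∃ f : ℝ → ℝ, (∀ c : ℝ, 0 < c → 0 < f c ∧ Phi (f c) c = 1 - 1/P) ∧
      ContDiffOn ℝ (⊤ : ℕ∞) f (Set.Ioi 0) ∧
      Tendsto f atTop (nhds (Real.log (P / (P - 1))))) := by
  refine ⟨fun c hc => exists_unique_root hP hc, ?_⟩
  set f : ℝ → ℝ := fun c => if hc : 0 < c then (exists_unique_root hP hc).exists.choose else 1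
    with hfdef
  have hf : ∀ c : ℝ, 0 < c → 0 < f c ∧ Phi (f c) c = 1 - 1/P := by
    intro c hc
    rw [hfdef]
    simp only [dif_pos hc]
    exact (exists_unique_root hP hc).exists.choose_spec
  have hq1 : 1 < P/(P-1) := by rw [lt_div_iff₀ (by linarith)]; linarith
  have hq0 : 0 < P/(P-1) := by linarith
  have hlq : 0 < Real.log (P/(P-1)) := Real.log_pos hq1
  refine ⟨f, hf, ?_, ?_⟩
  · intro c hc
    exact (contDiffAt_root P hP f hf hc).contDiffWithinAt
  · rw [tendsto_order]
    constructor
    · intro x hx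
      set t := max x (Real.log (P/(P-1)) / 2) with htdef
      have ht0 : 0 < t := lt_of_lt_of_le (by linarith) (le_max_right _ _)
      have htlt : t < Real.log (P/(P-1)) := max_lt hx (by linarith)
      have hneg : Real.exp t - P/(P-1) < 0 := by
        have h := Real.exp_lt_exp.2 htlt
        rw [Real.exp_log hq0] at h; linarith
      have hev : ∀ᶠ c in atTop, Fp P (t, c) / nu c < 0 :=
        (tendsto_Fquot P t ht0).eventually_lt_const hneg
      filter_upwards [hev, eventually_gt_atTop 0] with c hc1 hc2
      have hnc := nu_pos hc2
      have hFp : Fp P (t, c) < 0 := by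
        by_contra h
        push_neg at h
        have := div_nonneg h hnc.le
        linarith
      rw [Fp_eq] at hFp
      have hK : Dfun c (f c) = (nu c - lam c) * (P/(P-1)) :=
        (phi_eq_iff hP hc2 _).1 (hf c hc2).2
      have hlt : Dfun c t < Dfun c (f c) := by rw [hK]; linarith
      have := ((Dfun_strictMonoOn hc2).lt_iff_lt (mem_Ici.2 ht0.le)
        (mem_Ici.2 (hf c hc2).1.le)).1 hlt
      exact lt_of_le_of_lt (le_max_left x _) this
    · intro x hx
      set t := (Real.log (P/(P-1)) + x)/2 with htdef
      have ht0 : 0 < t := by rw [htdef]; linarith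
      have htgt : Real.log (P/(P-1)) < t := by rw [htdef]; linarith
      have htx : t < x := by rw [htdef]; linarith
      have hpos : 0 < Real.exp t - P/(P-1) := by
        have h := Real.exp_lt_exp.2 htgt
        rw [Real.exp_log hq0] at h; linarith
      have hev : ∀ᶠ c in atTop, 0 < Fp P (t, c) / nu c :=
        (tendsto_Fquot P t ht0).eventually_const_lt hpos
      filter_upwards [hev, eventually_gt_atTop 0] with c hc1 hc2
      have hnc := nu_pos hc2
      have hFp : 0 < Fp P (t, c) := by
        by_contra h
        push_neg at h
        have := div_nonpos_of_nonpos_of_nonneg h hnc.le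
        linarith
      rw [Fp_eq] at hFp
      have hK : Dfun c (f c) = (nu c - lam c) * (P/(P-1)) :=
        (phi_eq_iff hP hc2 _).1 (hf c hc2).2
      have hlt : Dfun c (f c) < Dfun c t := by rw [hK]; linarith
      have := ((Dfun_strictMonoOn hc2).lt_iff_lt (mem_Ici.2 (hf c hc2).1.le)
        (mem_Ici.2 ht0.le)).1 hlt
      linarith
end

section
/- Let P > 1, τ ≥ 0, c > 0, and set λ = c(c − √(c²+4))/2, ν = c(c + √(c²+4))/2. If the equation z² − cz − 1 − P e^{−zcτ} = 0 has a negative real root, then (ν − λ)/(ν e^{−λτ} − λ e^{−ντ}) ≥ 1 − 1/P. In other words, the domain 𝒟_m = {(τ,c) : z² − cz − 1 − Pe^{−zcτ} = 0 has a negative root} is contained in the domain 𝒟_s = {(τ,c) : (ν−λ)/(ν e^{−λτ} − λ e^{−ντ}) ≥ 1 − 1/P}. -/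
open Real Filter Set

lemma aux_exp_neg_one : Real.exp (-1:ℝ) ≤ 0.36788 := by
  have he := Real.exp_one_gt_d9
  have hm : Real.exp (-1:ℝ) * Real.exp 1 = 1 := by
    rw [← Real.exp_add]; norm_num
  nlinarith [Real.exp_pos (-1:ℝ)]

lemma aux_mul_exp (u : ℝ) (hu : 0 ≤ u) : u ≤ 0.36788 * Real.exp u := by
  have h1 : u ≤ Real.exp (u - 1) := by
    have := Real.add_one_le_exp (u - 1); linarith
  have h2 : Real.exp (u - 1) = Real.exp u * Real.exp (-1:ℝ) := by
    rw [← Real.exp_add]; ring_nf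
  nlinarith [Real.exp_pos u, aux_exp_neg_one]

lemma aux_sq_exp (u : ℝ) (hu : 0 ≤ u) : u^2 ≤ 0.54135 * Real.exp u := by
  have h1 := aux_mul_exp (u/2) (by linarith)
  have h2 : Real.exp (u/2) * Real.exp (u/2) = Real.exp u := by
    rw [← Real.exp_add]; ring_nf
  nlinarith [Real.exp_pos (u/2), mul_self_le_mul_self (by linarith : (0:ℝ) ≤ u/2) h1]

set_option maxHeartbeats 1000000 in
lemma aux_main (P τ a b s : ℝ) (hP : 1 < P) (hτ : 0 ≤ τ) (ha : 0 < a) (hb : 0 < b)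
    (hale : a ≤ b) (hs : 0 < s)
    (hkey : s*(s + (a+b)) = a*b*(P*Real.exp ((s+a)*τ))) :
    1 - 1/P ≤ (b + a) / (b * Real.exp (a*τ) + a * Real.exp (-(b*τ))) := by
  have hP0 : (0:ℝ) < P := by linarith
  set E : ℝ := Real.exp (a*τ) with hE
  set F : ℝ := Real.exp (-(b*τ)) with hF
  set G : ℝ := Real.exp (s*τ) with hG
  have hEpos : 0 < E := Real.exp_pos _
  have hFpos : 0 < F := Real.exp_pos _
  have hGpos : 0 < G := Real.exp_pos _
  set Dd : ℝ := b * E + a * F with hDd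
  have hDpos : 0 < Dd := by rw [hDd]; positivity
  have hsnn : (0:ℝ) ≤ s*(s + (a+b)) := by positivity
  have hGE : Real.exp ((s+a)*τ) = G * E := by
    rw [hG, hE, ← Real.exp_add]; ring_nf
  -- first order exp bounds
  have hE1 : E - 1 ≤ (a*τ) * E := by
    have h1 := Real.add_one_le_exp (-(a*τ))
    have hm : Real.exp (-(a*τ)) * E = 1 := by rw [hE, ← Real.exp_add]; norm_num
    nlinarith [Real.exp_pos (-(a*τ))]
  have hE2 : F - 1 ≤ (-(b*τ)) * F := by
    have h1 := Real.add_one_le_exp (b*τ)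
    have hm : Real.exp (b*τ) * F = 1 := by rw [hF, ← Real.exp_add]; norm_num
    nlinarith [Real.exp_pos (b*τ)]
  have hDlb : a + b ≤ Dd := by
    rw [hDd]
    have k1 : 1 + a*τ ≤ E := by have := Real.add_one_le_exp (a*τ); rw [hE]; linarith
    have k2 : 1 - b*τ ≤ F := by have := Real.add_one_le_exp (-(b*τ)); rw [hF]; linarith
    nlinarith [mul_le_mul_of_nonneg_left k1 hb.le, mul_le_mul_of_nonneg_left k2 ha.le]
  have hDdiff : Dd - (a+b) ≤ a*b*τ*(E - F) := by
    rw [hDd]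
    nlinarith [mul_le_mul_of_nonneg_left hE1 hb.le,
      mul_le_mul_of_nonneg_left hE2 ha.le]
  -- main inequality hW
  have hW : s*(s + (a+b))*(Dd - (a+b)) ≤ a*b*Real.exp ((s+a)*τ) * Dd := by
    rcases le_or_gt ((a+b)*τ) 1.24 with hB | hB
    · -- regime 1
      have hBnn : (0:ℝ) ≤ (a+b)*τ := by positivity
      have hsτ : (0:ℝ) ≤ s*τ := mul_nonneg hs.le hτ
      have hu1 := aux_mul_exp (s*τ) hsτ
      have hu2 := aux_sq_exp (s*τ) hsτ
      have hquad : (s*τ)*((s*τ) + (a+b)*τ) ≤ G := by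
        rw [hG]
        nlinarith [hu2, mul_le_mul_of_nonneg_left hu1 hBnn,
          mul_le_mul_of_nonneg_right hB (Real.exp_pos (s*τ)).le]
      have h1mB : E - F ≤ ((a+b)*τ) * E := by
        have hm : E * Real.exp (-((a+b)*τ)) = F := by
          rw [hE, hF, ← Real.exp_add]; ring_nf
        nlinarith [mul_le_mul_of_nonneg_left
          (Real.add_one_le_exp (-((a+b)*τ))) hEpos.le]
      calc s*(s + (a+b))*(Dd - (a+b))
          ≤ s*(s + (a+b))*(a*b*τ*(E - F)) := mul_le_mul_of_nonneg_left hDdiff hsnn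
        _ ≤ s*(s + (a+b))*(a*b*τ*(((a+b)*τ)*E)) := by
            apply mul_le_mul_of_nonneg_left _ hsnn
            apply mul_le_mul_of_nonneg_left h1mB (by positivity)
        _ = (a*b*E)*((s*τ)*((s*τ) + (a+b)*τ)*(a+b)) := by ring
        _ ≤ (a*b*E)*(G*(a+b)) := by
            apply mul_le_mul_of_nonneg_left _ (by positivity)
            exact mul_le_mul_of_nonneg_right hquad (by positivity)
        _ ≤ (a*b*E)*(G*Dd) := by
            apply mul_le_mul_of_nonneg_left _ (by positivity)
            exact mul_le_mul_of_nonneg_left hDlb hGpos.le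
        _ = a*b*Real.exp ((s+a)*τ) * Dd := by rw [hGE]; ring
    · -- regime 2
      have hτpos : 0 < τ := by
        rcases hτ.lt_or_eq with h' | h'
        · exact h'
        · exfalso; rw [← h'] at hB; norm_num at hB
      have hF1 : F ≤ 1 := by
        rw [hF, show (1:ℝ) = Real.exp 0 by simp]
        exact Real.exp_le_exp.mpr (by nlinarith)
      have hDdiff2 : Dd - (a+b) ≤ a*b*τ*E := by
        rw [hDd]
        nlinarith [mul_le_mul_of_nonneg_left hE1 hb.le, hF1, ha.le]
      have hsτ : (0:ℝ) ≤ s*τ := mul_nonneg hs.le hτ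
      have hu1 := aux_mul_exp (s*τ) hsτ
      have hu2 := aux_sq_exp (s*τ) hsτ
      have hta : (0:ℝ) ≤ a*τ := by positivity
      have ht2 : 2*(a*τ) ≤ (a+b)*τ := by nlinarith
      have hpoly : 0.54135 + 0.36788*((a+b)*τ) ≤ ((a+b)*τ - a*τ)*(1 + a*τ) := by
        rcases le_or_gt ((a+b)*τ) 2 with h2 | h2
        · nlinarith [mul_nonneg (by linarith : (0:ℝ) ≤ (a+b)*τ - 2*(a*τ))
            (by linarith : (0:ℝ) ≤ a*τ + 1 - ((a+b)*τ)/2), sq_nonneg ((a+b)*τ - 1.24)]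
        · nlinarith [mul_nonneg hta (by linarith : (0:ℝ) ≤ (a+b)*τ - 1 - a*τ)]
      have hquad2 : (s*τ)*((s*τ) + (a+b)*τ) ≤ (b*τ)*(E*G) := by
        have hBnn : (0:ℝ) ≤ (a+b)*τ := by positivity
        have hstep : (s*τ)*((s*τ) + (a+b)*τ) ≤ (0.54135 + 0.36788*((a+b)*τ))*G := by
          rw [hG]
          nlinarith [hu2, mul_le_mul_of_nonneg_left hu1 hBnn]
        have hstep2 : (0.54135 + 0.36788*((a+b)*τ))*G ≤ (((a+b)*τ - a*τ)*(1 + a*τ))*G :=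
          mul_le_mul_of_nonneg_right hpoly hGpos.le
        have hstep3 : (((a+b)*τ - a*τ)*(1 + a*τ))*G ≤ (b*τ)*(E*G) := by
          have h1t : 1 + a*τ ≤ E := by
            rw [hE]; have := Real.add_one_le_exp (a*τ); linarith
          have hbt : ((a+b)*τ - a*τ) = b*τ := by ring
          rw [hbt]
          have hbτ : (0:ℝ) ≤ b*τ := by positivity
          nlinarith [mul_le_mul_of_nonneg_left h1t hbτ, hGpos]
        linarith
      -- multiply target by τ and cancel
      have hWτ : (s*(s + (a+b))*(Dd - (a+b)))*τ ≤ (a*b*Real.exp ((s+a)*τ) * Dd)*τ := by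
        have c1 : (s*(s + (a+b))*(Dd - (a+b)))*τ ≤ (s*(s + (a+b))*(a*b*τ*E))*τ :=
          mul_le_mul_of_nonneg_right (mul_le_mul_of_nonneg_left hDdiff2 hsnn) hτ
        have c2 : (s*(s + (a+b))*(a*b*τ*E))*τ = (a*b*E)*((s*τ)*((s*τ) + (a+b)*τ)) := by
          ring
        have c3 : (a*b*E)*((s*τ)*((s*τ) + (a+b)*τ)) ≤ (a*b*E)*((b*τ)*(E*G)) :=
          mul_le_mul_of_nonneg_left hquad2 (by positivity)
        have c4 : (a*b*E)*((b*τ)*(E*G)) ≤ (a*b*E)*(τ*Dd*G) := by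
          apply mul_le_mul_of_nonneg_left _ (by positivity)
          have hbE : b*E ≤ Dd := by rw [hDd]; nlinarith
          nlinarith [mul_le_mul_of_nonneg_right hbE (mul_nonneg hτ hGpos.le)]
        have c5 : (a*b*E)*(τ*Dd*G) = (a*b*Real.exp ((s+a)*τ) * Dd)*τ := by
          rw [hGE]; ring
        linarith
      exact le_of_mul_le_mul_right hWτ hτpos
  -- deduce  P*(Dd - (a+b)) ≤ Dd
  have hEEpos : 0 < a*b*Real.exp ((s+a)*τ) := by positivity
  have hK : P*(Dd - (a+b)) ≤ Dd := by
    have h5 : (a*b*Real.exp ((s+a)*τ)) * (P*(Dd - (a+b)))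
        ≤ (a*b*Real.exp ((s+a)*τ)) * Dd := by
      calc (a*b*Real.exp ((s+a)*τ)) * (P*(Dd - (a+b)))
          = s*(s + (a+b))*(Dd - (a+b)) := by rw [hkey]; ring
        _ ≤ (a*b*Real.exp ((s+a)*τ)) * Dd := hW
    exact le_of_mul_le_mul_left h5 hEEpos
  -- conclude
  rw [le_div_iff₀ hDpos]
  have h3 : Dd - (a+b) ≤ P⁻¹ * Dd := by
    calc Dd - (a+b) = P⁻¹*(P*(Dd - (a+b))) := by field_simp
      _ ≤ P⁻¹*Dd := mul_le_mul_of_nonneg_left hK (by positivity)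
  have h4' : (1 - 1/P)*Dd = Dd - P⁻¹*Dd := by ring
  linarith

set_option maxHeartbeats 1000000 in
/-- `𝒟_m ⊆ 𝒟_s`: if `z² - cz - 1 - P e^{-zcτ} = 0` has a negative real
root, then `(ν - λ)/(ν e^{-λτ} - λ e^{-ντ}) ≥ 1 - 1/P`. -/
theorem stmt_15 (P τ c : ℝ) (hP : 1 < P) (hτ : 0 ≤ τ) (hc : 0 < c)
    (h : ∃ z : ℝ, z < 0 ∧ z^2 - c*z - 1 - P * Real.exp (-z*(c*τ)) = 0) :
    1 - 1/P ≤ (nu c - lam c) /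
      (nu c * Real.exp (-(lam c) * τ) - lam c * Real.exp (-(nu c) * τ)) := by
  obtain ⟨z, hzneg, hzeq⟩ := h
  have h4 : (0:ℝ) ≤ c^2 + 4 := by positivity
  have hSsq : (Real.sqrt (c^2 + 4))^2 = c^2 + 4 := Real.sq_sqrt h4
  have hSpos : 0 < Real.sqrt (c^2 + 4) := Real.sqrt_pos.mpr (by positivity)
  set S := Real.sqrt (c^2 + 4) with hS
  obtain ⟨a, hadef⟩ : ∃ a : ℝ, a = c*(S - c)/2 := ⟨_, rfl⟩
  obtain ⟨b, hbdef⟩ : ∃ b : ℝ, b = c*(S + c)/2 := ⟨_, rfl⟩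
  have hcS : c < S := by nlinarith
  have hlam : lam c = -a := by
    rw [hadef]; simp only [lam, ← hS]; ring
  have hnu : nu c = b := by
    rw [hbdef]; simp only [nu, ← hS]; ring
  have ha : 0 < a := by rw [hadef]; nlinarith
  have hb : 0 < b := by rw [hbdef]; nlinarith
  have hab : a*b = c^2 := by
    rw [hadef, hbdef]; linear_combination (c^2/4) * hSsq
  have hba : b - a = c^2 := by rw [hadef, hbdef]; ring
  have hale : a ≤ b := by nlinarith [sq_nonneg c]
  have hP0 : (0:ℝ) < P := by linarith
  -- characteristic root manipulation
  have hPe : P * Real.exp (-z*(c*τ)) = z^2 - c*z - 1 := by linarith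
  have hEx : 0 < P * Real.exp (-z*(c*τ)) := mul_pos hP0 (Real.exp_pos _)
  have hczb : c*z - b < 0 := by nlinarith [mul_neg_of_pos_of_neg hc hzneg]
  have hprod : (c*z + a)*(c*z - b) = c^2 * (P * Real.exp (-z*(c*τ))) := by
    rw [hPe]; linear_combination (-(c*z)) * hba - hab
  have hcza : c*z + a < 0 := by
    nlinarith [mul_pos (pow_pos hc 2) hEx]
  obtain ⟨s, hsdef⟩ : ∃ s : ℝ, s = -(c*z) - a := ⟨_, rfl⟩
  have hs : 0 < s := by rw [hsdef]; linarith
  have hkey : s*(s + (a+b)) = a*b*(P*Real.exp ((s+a)*τ)) := by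
    have harg : (s+a)*τ = -z*(c*τ) := by rw [hsdef]; ring
    rw [harg, hsdef]
    linear_combination hprod - (P * Real.exp (-z*(c*τ))) * hab
  have hmain := aux_main P τ a b s hP hτ ha hb hale hs hkey
  rw [hlam, hnu]
  rw [show (-(-a)) * τ = a*τ by ring, show (-b) * τ = -(b*τ) by ring]
  rw [show b - -a = b + a by ring,
    show b * Real.exp (a*τ) - -a * Real.exp (-(b*τ))
      = b * Real.exp (a*τ) + a * Real.exp (-(b*τ)) by ring]
  exact hmain
end

section
/- For all w ∈ (1, 2] and all σ > 0, the quantity A(w,σ) := e^{wσ}( e σ²(w−1) − (4 + wσ) ) + e σ²(w−1)² + (4 + wσ)(1 + w(e^{σ} − 1)) is strictly positive, where e is Euler's number. -/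
open Real Filter Set

/-- Geometric-type bound: `w(w^{n+1}-1) ≤ (w-1)(n+2)w^n` for `1 ≤ w ≤ 2`. -/
lemma aux_pow_bound_1 (w : ℝ) (h1 : 1 ≤ w) (h2 : w ≤ 2) :
    ∀ n : ℕ, w * (w^(n+1) - 1) ≤ (w-1) * ((n:ℝ)+2) * w^n := by
  intro n
  induction n with
  | zero => simp; nlinarith
  | succ n ih =>
    have hu : (1:ℝ) ≤ w^n := one_le_pow₀ h1
    have hw0 : (0:ℝ) ≤ w := by linarith
    have hmul := mul_le_mul_of_nonneg_left ih hw0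
    have hprod : 0 ≤ (w-1) * (w^n * w - w) := by
      have : 0 ≤ w^n * w - w := by nlinarith
      have : 0 ≤ w - 1 := by linarith
      nlinarith
    have e1 : w^(n+1) = w^n * w := pow_succ w n
    have e2 : w^(n+2) = w^n * w * w := by rw [pow_succ, pow_succ]
    push_cast
    rw [e1, e2]
    rw [e1] at hmul
    push_cast at hmul
    nlinarith [hmul, hprod]

/-- Geometric-type bound: `w²(w^{n+1}-1) ≤ (w-1)(n+2)w^{n+1}` for `1 ≤ w ≤ 2`. -/
lemma aux_pow_bound_2 (w : ℝ) (h1 : 1 ≤ w) (h2 : w ≤ 2) :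
    ∀ n : ℕ, w^2 * (w^(n+1) - 1) ≤ (w-1) * ((n:ℝ)+2) * w^(n+1) := by
  intro n
  induction n with
  | zero =>
    simp
    nlinarith [mul_nonneg (mul_nonneg (sub_nonneg.2 h1) (by linarith : (0:ℝ) ≤ 2-w))
      (by linarith : (0:ℝ) ≤ w)]
  | succ n ih =>
    have hu : (1:ℝ) ≤ w^n := one_le_pow₀ h1
    have hw0 : (0:ℝ) ≤ w := by linarith
    have hmul := mul_le_mul_of_nonneg_left ih hw0
    have hprod : 0 ≤ (w-1) * (w^n * w * w - w * w) := by
      have h3 : 0 ≤ w^n * w * w - w * w := by nlinarith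
      have h4 : 0 ≤ w - 1 := by linarith
      nlinarith
    have e1 : w^(n+1) = w^n * w := pow_succ w n
    have e2 : w^(n+2) = w^n * w * w := by rw [pow_succ, pow_succ]
    show w^2 * (w^(n+2) - 1) ≤ (w-1) * (((n+1:ℕ):ℝ)+2) * w^(n+2)
    push_cast
    rw [e2]
    rw [e1] at hmul
    nlinarith [hmul, hprod]

set_option maxHeartbeats 1000000 in
/-- positivity of
`A(w,σ) = e^{wσ}(e σ²(w-1) - (4 + wσ)) + e σ²(w-1)² + (4 + wσ)(1 + w(e^σ - 1))`
for `w ∈ (1,2]` and `σ > 0`. -/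
theorem stmt_16 (w σ : ℝ) (hw1 : 1 < w) (hw2 : w ≤ 2) (hσ : 0 < σ) :
    0 < Real.exp (w*σ) * (Real.exp 1 * σ^2 * (w - 1) - (4 + w*σ))
        + Real.exp 1 * σ^2 * (w - 1)^2
        + (4 + w*σ) * (1 + w * (Real.exp σ - 1)) := by
  have hw0 : (0:ℝ) < w := by linarith
  have hw1' : (0:ℝ) ≤ w - 1 := by linarith
  set E := Real.exp 1 with hE
  have hE1 : (2.7182818283 : ℝ) < E := Real.exp_one_gt_d9
  have hE2 : E < 2.7182818286 := Real.exp_one_lt_d9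
  set F : ℕ → ℝ := fun n => (w*σ)^n / n.factorial with hFdef
  set G : ℕ → ℝ := fun n => σ^n / n.factorial with hGdef
  have hF : Summable F := Real.summable_pow_div_factorial (w*σ)
  have hG : Summable G := Real.summable_pow_div_factorial σ
  have hF1 : Summable (fun n => F (n+1)) := (summable_nat_add_iff 1).2 hF
  have hF2 : Summable (fun n => F (n+2)) := (summable_nat_add_iff 2).2 hF
  have hG1 : Summable (fun n => G (n+1)) := (summable_nat_add_iff 1).2 hG
  have hG2 : Summable (fun n => G (n+2)) := (summable_nat_add_iff 2).2 hG
  have tF : ∑' n, F n = Real.exp (w*σ) := by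
    rw [Real.exp_eq_exp_ℝ, NormedSpace.exp_eq_tsum_div]
  have tG : ∑' n, G n = Real.exp σ := by
    rw [Real.exp_eq_exp_ℝ, NormedSpace.exp_eq_tsum_div]
  have hF0 : F 0 = 1 := by simp [hFdef]
  have hF1v : F 1 = w*σ := by simp [hFdef]
  have hG0 : G 0 = 1 := by simp [hGdef]
  have hG1v : G 1 = σ := by simp [hGdef]
  have tF1 : ∑' n, F (n+1) = Real.exp (w*σ) - 1 := by
    have h := Summable.tsum_eq_zero_add hF
    rw [tF, hF0] at h; linarith
  have tF2 : ∑' n, F (n+2) = Real.exp (w*σ) - 1 - w*σ := by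
    have h := Summable.tsum_eq_zero_add hF1
    have h2 : ∑' n, F (n+1+1) = ∑' n, F (n+2) := rfl
    rw [h2, tF1, hF1v] at h; linarith
  have tG1 : ∑' n, G (n+1) = Real.exp σ - 1 := by
    have h := Summable.tsum_eq_zero_add hG
    rw [tG, hG0] at h; linarith
  have tG2 : ∑' n, G (n+2) = Real.exp σ - 1 - σ := by
    have h := Summable.tsum_eq_zero_add hG1
    have h2 : ∑' n, G (n+1+1) = ∑' n, G (n+2) := rfl
    rw [h2, tG1, hG1v] at h; linarith
  set d : ℕ → ℝ := fun n =>
    E*(w-1)*σ^2 * F n + w^2*σ * G (n+1) + 4*w * G (n+2) - w*σ * F (n+1) - 4 * F (n+2)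
    with hddef
  have hFs : Summable (fun n => E*(w-1)*σ^2 * F n) := hF.mul_left _
  have hG1s : Summable (fun n => w^2*σ * G (n+1)) := hG1.mul_left _
  have hG2s : Summable (fun n => 4*w * G (n+2)) := hG2.mul_left _
  have hF1s : Summable (fun n => w*σ * F (n+1)) := hF1.mul_left _
  have hF2s : Summable (fun n => (4:ℝ) * F (n+2)) := hF2.mul_left _
  have hd : Summable d := (((hFs.add hG1s).add hG2s).sub hF1s).sub hF2s
  have hsum : ∑' n, d n
      = E*(w-1)*σ^2 * Real.exp (w*σ) + w^2*σ * (Real.exp σ - 1)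
        + 4*w * (Real.exp σ - 1 - σ) - w*σ * (Real.exp (w*σ) - 1)
        - 4 * (Real.exp (w*σ) - 1 - w*σ) := by
    rw [hddef]
    rw [Summable.tsum_sub ((((hFs.add hG1s).add hG2s)).sub hF1s) hF2s,
        Summable.tsum_sub ((hFs.add hG1s).add hG2s) hF1s,
        Summable.tsum_add (hFs.add hG1s) hG2s, Summable.tsum_add hFs hG1s,
        tsum_mul_left, tsum_mul_left, tsum_mul_left, tsum_mul_left, tsum_mul_left,
        tF, tG1, tG2, tF1, tF2]
  -- coefficient nonnegativity for n ≥ 2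
  have hcoef : ∀ m : ℕ, 0 ≤ d (m+2) := by
    intro m
    have L1 := aux_pow_bound_2 w (le_of_lt hw1) hw2 (m+1)
    have L2 := aux_pow_bound_1 w (le_of_lt hw1) hw2 (m+2)
    have hkey : ((m:ℝ)+7) ≤ E*((m:ℝ)+3) := by
      have hm : (0:ℝ) ≤ (m:ℝ) := Nat.cast_nonneg m
      nlinarith [hE1, hm]
    have hv : (0:ℝ) < w^(m+2) := pow_pos hw0 _
    set B : ℝ := E*(w-1)*w^(m+2)*(((m:ℝ)+3)*((m:ℝ)+4)) + w^2*((m:ℝ)+4) + 4*w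
        - w^(m+4)*((m:ℝ)+4) - 4*w^(m+4) with hBdef
    have hB : 0 ≤ B := by
      rw [hBdef]
      have e1 : w^(m+1+1) = w^(m+2) := rfl
      have e2 : w^(m+2+1) = w^(m+2) * w := pow_succ w (m+2)
      have e4 : w^(m+4) = w^(m+2) * w * w := by
        rw [show m+4 = (m+2)+1+1 from rfl, pow_succ, pow_succ]
      rw [e1] at L1
      rw [e2] at L2
      push_cast at L1 L2
      have hmul1 := mul_le_mul_of_nonneg_left L1 (by positivity : (0:ℝ) ≤ (m:ℝ)+4)
      have hprod : 0 ≤ (w-1) * w^(m+2) * (((m:ℝ)+4) * (E*((m:ℝ)+3) - ((m:ℝ)+7))) := by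
        have h1 : (0:ℝ) ≤ ((m:ℝ)+4) * (E*((m:ℝ)+3) - ((m:ℝ)+7)) := by
          have := hkey
          have : (0:ℝ) ≤ E*((m:ℝ)+3) - ((m:ℝ)+7) := by linarith
          positivity
        exact mul_nonneg (mul_nonneg hw1' (le_of_lt hv)) h1
      rw [e4]
      linarith [hmul1, L2, hprod]
    have hfac3 : ((m+3).factorial : ℝ) = ((m:ℝ)+3) * ((m+2).factorial : ℝ) := by
      rw [show m+3 = (m+2)+1 from rfl, Nat.factorial_succ]
      push_cast; ring
    have hfac4 : ((m+4).factorial : ℝ) = ((m:ℝ)+4) * (((m:ℝ)+3) * ((m+2).factorial : ℝ)) := by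
      rw [show m+4 = (m+3)+1 from rfl, Nat.factorial_succ]
      push_cast [hfac3]; ring
    have hfpos : (0:ℝ) < ((m+2).factorial : ℝ) := by
      exact_mod_cast Nat.factorial_pos (m+2)
    have heq : d (m+2) = σ^(m+4) / ((m+4).factorial : ℝ) * B := by
      simp only [hddef, hFdef, hGdef, hBdef]
      rw [show m+2+1 = m+3 from rfl, show m+2+2 = m+4 from rfl, hfac3, hfac4]
      have h3 : ((m:ℝ)+3) ≠ 0 := by positivity
      have h4 : ((m:ℝ)+4) ≠ 0 := by positivity
      have h2f : ((m+2).factorial : ℝ) ≠ 0 := ne_of_gt hfpos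
      field_simp
      ring
    rw [heq]
    have : (0:ℝ) ≤ σ^(m+4) / ((m+4).factorial : ℝ) := by positivity
    exact mul_nonneg this hB
  -- lower bound by first three terms
  have h012 : d 0 + d 1 + d 2 ≤ ∑' n, d n := by
    have h := Summable.sum_le_tsum (Finset.range 3)
      (fun i hi => by
        have h3 : 3 ≤ i := by simpa using hi
        obtain ⟨k, rfl⟩ := Nat.exists_eq_add_of_le (show 2 ≤ i by omega)
        have := hcoef k
        rwa [show k+2 = 2+k from Nat.add_comm k 2] at this) hd
    simpa [Finset.sum_range_succ] using h
  -- explicit quadratic positivity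
  have hb : (0:ℝ) < 3*E*w - 2*w^2 - 2*w - 1 := by
    nlinarith [mul_nonneg hw1' (by linarith : (0:ℝ) ≤ 2 - w),
      mul_nonneg (by linarith : (0:ℝ) ≤ E - 2.7) (le_of_lt hw0)]
  have hdisc : (6*E - 7*w - 4)^2 < 4*(6*(E-2))*(3*E*w - 2*w^2 - 2*w - 1) := by
    nlinarith [hE1, hE2,
      mul_nonneg (mul_nonneg hw1' (by linarith : (0:ℝ) ≤ 2 - w))
        (by nlinarith : (0:ℝ) ≤ 48*E - 47),
      sq_nonneg (E - 2.7182818283)]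
  have hq : 0 < 6*(E-2) + (6*E-7*w-4)*σ + (3*E*w-2*w^2-2*w-1)*σ^2 := by
    nlinarith [sq_nonneg (2*(3*E*w-2*w^2-2*w-1)*σ + (6*E-7*w-4)), hb, hdisc,
      mul_pos hb (mul_pos hσ hσ)]
  have hfaceq : E*σ^2*(w-1)^2 + (d 0 + d 1 + d 2)
      = w*(w-1)*σ^2/6 * (6*(E-2) + (6*E-7*w-4)*σ + (3*E*w-2*w^2-2*w-1)*σ^2) := by
    simp only [hddef, hFdef, hGdef]
    norm_num [Nat.factorial]
    ring
  have hpos : 0 < E*σ^2*(w-1)^2 + (d 0 + d 1 + d 2) := by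
    rw [hfaceq]
    have h1 : 0 < w*(w-1)*σ^2/6 := by
      have : (0:ℝ) < w - 1 := by linarith
      positivity
    exact mul_pos h1 hq
  have hA : Real.exp (w*σ) * (E * σ^2 * (w - 1) - (4 + w*σ))
        + E * σ^2 * (w - 1)^2
        + (4 + w*σ) * (1 + w * (Real.exp σ - 1))
      = E*σ^2*(w-1)^2 + ∑' n, d n := by
    rw [hsum]; ring
  rw [hA]
  linarith [h012, hpos]
end

section
/- Let P > 0 and τ > 0, and consider the characteristic function χ₊(z) = z + 1 + P e^{−zτ} on the real line. Then χ₊ has exactly two distinct real zeros if and only if P τ e^{1+τ} < 1; moreover, in that case both zeros z₂ < z₁ are negative. -/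
/-!
Writing `m = log (P τ) / τ`, one has `P e^{-zτ} = e^{(m - z)τ} / τ`, so
`χ₊(z) = z + 1 + e^{(m - z)τ} / τ` has derivative `1 - e^{(m - z)τ}`: it decreases strictly on
`(-∞, m]`, increases strictly on `[m, ∞)` and is positive far to the left and on `[0, ∞)`.
Hence it has two zeros exactly when its minimum `χ₊(m) = m + 1 + 1/τ` is negative, i.e. when
`log (P τ) < -(1 + τ)`, and every zero is negative since `χ₊ > 0` on `[0, ∞)`.
-/

open Real Filter Set

section Valley

variable {f : ℝ → ℝ} {m : ℝ}

theorem eq_of_apply_eq_zero_of_valley (hanti : StrictAntiOn f (Iic m))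
    (hmono : StrictMonoOn f (Ici m)) (hm : 0 ≤ f m) {z : ℝ} (hz : f z = 0) : z = m := by
  rcases lt_trichotomy z m with h | h | h
  · have := hanti h.le self_mem_Iic h
    linarith
  · exact h
  · have := hmono self_mem_Ici h.le h
    linarith

theorem exists_two_zeros_iff_of_valley (hf : Continuous f) (hanti : StrictAntiOn f (Iic m))
    (hmono : StrictMonoOn f (Ici m)) {a b : ℝ} (ha : a ≤ m) (hfa : 0 < f a) (hb : m ≤ b)
    (hfb : 0 < f b) :
    (∃ z₁ z₂ : ℝ, z₂ < z₁ ∧ f z₁ = 0 ∧ f z₂ = 0 ∧ ∀ z, f z = 0 → z = z₁ ∨ z = z₂) ↔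
      f m < 0 := by
  constructor
  · rintro ⟨z₁, z₂, h, hz₁, hz₂, -⟩
    by_contra! hm
    have h₁ := eq_of_apply_eq_zero_of_valley hanti hmono hm hz₁
    have h₂ := eq_of_apply_eq_zero_of_valley hanti hmono hm hz₂
    exact h.ne (h₂.trans h₁.symm)
  · intro hm
    obtain ⟨z₁, ⟨hmz₁, -⟩, hz₁⟩ := intermediate_value_Ioo hb hf.continuousOn ⟨hm, hfb⟩
    obtain ⟨z₂, ⟨-, hz₂m⟩, hz₂⟩ := intermediate_value_Ioo' ha hf.continuousOn ⟨hm, hfa⟩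
    refine ⟨z₁, z₂, hz₂m.trans hmz₁, hz₁, hz₂, fun z hz => ?_⟩
    rcases le_or_gt z m with h | h
    · exact Or.inr (hanti.injOn h hz₂m.le (hz.trans hz₂.symm))
    · exact Or.inl (hmono.injOn h.le hmz₁.le (hz.trans hz₁.symm))

end Valley

noncomputable section BlowflyChar

def blowflyChar (P τ z : ℝ) : ℝ := z + 1 + P * exp (-z * τ)

def blowflyCharArgmin (P τ : ℝ) : ℝ := log (P * τ) / τ

variable {P τ : ℝ}

theorem continuous_blowflyChar (P τ : ℝ) : Continuous (blowflyChar P τ) := by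
  unfold blowflyChar
  fun_prop

theorem hasDerivAt_blowflyChar (P τ z : ℝ) :
    HasDerivAt (blowflyChar P τ) (1 - P * τ * exp (-z * τ)) z := by
  have hlin : HasDerivAt (fun z : ℝ => -z * τ) (-τ) z := by
    simpa using (hasDerivAt_neg z).mul_const τ
  exact (((hasDerivAt_id' z).add_const 1).add (hlin.exp.const_mul P)).congr_deriv (by ring)

theorem blowflyChar_pos_of_nonneg (hP : 0 ≤ P) {z : ℝ} (hz : 0 ≤ z) : 0 < blowflyChar P τ z := by
  unfold blowflyChar
  positivity

theorem mul_exp_neg_mul_eq (hP : 0 < P) (hτ : 0 < τ) (z : ℝ) :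
    P * exp (-z * τ) = exp ((blowflyCharArgmin P τ - z) * τ) / τ := by
  have hτ' := hτ.ne'
  rw [sub_mul, blowflyCharArgmin, div_mul_cancel₀ _ hτ', exp_sub, exp_log (by positivity),
    neg_mul, exp_neg]
  field_simp

theorem blowflyChar_eq (hP : 0 < P) (hτ : 0 < τ) (z : ℝ) :
    blowflyChar P τ z = z + 1 + exp ((blowflyCharArgmin P τ - z) * τ) / τ := by
  rw [blowflyChar, mul_exp_neg_mul_eq hP hτ]

theorem hasDerivAt_blowflyChar' (hP : 0 < P) (hτ : 0 < τ) (z : ℝ) :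
    HasDerivAt (blowflyChar P τ) (1 - exp ((blowflyCharArgmin P τ - z) * τ)) z := by
  convert hasDerivAt_blowflyChar P τ z using 2
  rw [mul_comm P, mul_assoc, mul_exp_neg_mul_eq hP hτ, mul_div_cancel₀ _ hτ.ne']

theorem blowflyChar_strictAntiOn (hP : 0 < P) (hτ : 0 < τ) :
    StrictAntiOn (blowflyChar P τ) (Iic (blowflyCharArgmin P τ)) := by
  refine strictAntiOn_of_deriv_neg (convex_Iic _) (continuous_blowflyChar P τ).continuousOn
    fun z hz => ?_
  rw [interior_Iic, mem_Iio] at hz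
  rw [(hasDerivAt_blowflyChar' hP hτ z).deriv, sub_neg]
  exact one_lt_exp_iff.2 (mul_pos (sub_pos.2 hz) hτ)

theorem blowflyChar_strictMonoOn (hP : 0 < P) (hτ : 0 < τ) :
    StrictMonoOn (blowflyChar P τ) (Ici (blowflyCharArgmin P τ)) := by
  refine strictMonoOn_of_deriv_pos (convex_Ici _) (continuous_blowflyChar P τ).continuousOn
    fun z hz => ?_
  rw [interior_Ici, mem_Ioi] at hz
  rw [(hasDerivAt_blowflyChar' hP hτ z).deriv, sub_pos]
  exact exp_lt_one_iff.2 (mul_neg_of_neg_of_pos (sub_neg.2 hz) hτ)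

theorem blowflyChar_argmin (hP : 0 < P) (hτ : 0 < τ) :
    blowflyChar P τ (blowflyCharArgmin P τ) = blowflyCharArgmin P τ + 1 + 1 / τ := by
  rw [blowflyChar_eq hP hτ, sub_self, zero_mul, exp_zero]

theorem blowflyChar_argmin_neg_iff (hP : 0 < P) (hτ : 0 < τ) :
    blowflyChar P τ (blowflyCharArgmin P τ) < 0 ↔ P * τ * exp (1 + τ) < 1 := by
  have hscaled : blowflyChar P τ (blowflyCharArgmin P τ) * τ = log (P * τ) + (1 + τ) := by
    rw [blowflyChar_argmin hP hτ, blowflyCharArgmin]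
    field_simp
    ring
  calc blowflyChar P τ (blowflyCharArgmin P τ) < 0
      ↔ blowflyChar P τ (blowflyCharArgmin P τ) * τ < 0 * τ :=
        (mul_lt_mul_iff_of_pos_right hτ).symm
    _ ↔ log (P * τ) < -(1 + τ) := by rw [hscaled, zero_mul, lt_neg_iff_add_neg]
    _ ↔ P * τ < exp (-(1 + τ)) := log_lt_iff_lt_exp (mul_pos hP hτ)
    _ ↔ P * τ * exp (1 + τ) < 1 := by rw [exp_neg, ← one_div, lt_div_iff₀ (exp_pos _)]

theorem exists_blowflyChar_pos_le_argmin (hP : 0 < P) (hτ : 0 < τ) :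
    ∃ a ≤ blowflyCharArgmin P τ, 0 < blowflyChar P τ a := by
  set m := blowflyCharArgmin P τ
  set s := |(m + 1) * τ|
  have hs : 0 ≤ s := abs_nonneg _
  refine ⟨m - s / τ, sub_le_self _ (div_nonneg hs hτ.le), ?_⟩
  rw [blowflyChar_eq hP hτ, show (m - (m - s / τ)) * τ = s by field_simp; ring]
  -- `τ χ₊(m - s/τ) = (m + 1) τ - s + e^s` and `e^s ≥ 1 + s + s²/2 > 2 s ≥ s - (m + 1) τ`
  have hexp := quadratic_le_exp_of_nonneg hs
  have hlin : -((m + 1) * τ) ≤ s := neg_le_abs _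
  have hscaled : 0 < (m - s / τ + 1 + exp s / τ) * τ := by
    field_simp
    nlinarith [sq_nonneg (s - 1)]
  exact pos_of_mul_pos_left hscaled hτ.le

end BlowflyChar

/-- `χ₊(z) = z + 1 + P e^{-zτ}` has exactly two distinct real zeros iff
`P τ e^{1+τ} < 1`, and in that case both zeros are negative. -/
theorem stmt_18 (P τ : ℝ) (hP : 0 < P) (hτ : 0 < τ) :
    ((∃ z₁ z₂ : ℝ, z₂ < z₁ ∧
        z₁ + 1 + P * Real.exp (-z₁*τ) = 0 ∧
        z₂ + 1 + P * Real.exp (-z₂*τ) = 0 ∧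
        (∀ z : ℝ, z + 1 + P * Real.exp (-z*τ) = 0 → z = z₁ ∨ z = z₂)) ↔
      P * τ * Real.exp (1 + τ) < 1) ∧
    (P * τ * Real.exp (1 + τ) < 1 →
      ∀ z : ℝ, z + 1 + P * Real.exp (-z*τ) = 0 → z < 0) := by
  obtain ⟨a, ha, hfa⟩ := exists_blowflyChar_pos_le_argmin hP hτ
  have hb := le_max_left (blowflyCharArgmin P τ) 0
  have hfb := blowflyChar_pos_of_nonneg (τ := τ) hP.le (le_max_right (blowflyCharArgmin P τ) 0)
  refine ⟨(exists_two_zeros_iff_of_valley (continuous_blowflyChar P τ)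
    (blowflyChar_strictAntiOn hP hτ) (blowflyChar_strictMonoOn hP hτ) ha hfa hb hfb).trans
    (blowflyChar_argmin_neg_iff hP hτ), fun _ z hz => ?_⟩
  by_contra! hz₀
  exact (blowflyChar_pos_of_nonneg hP.le hz₀).ne' hz
end

section
/- For every τ > 0: e^{eτ} > τ e^{1+τ} + 1, where e is Euler's number. Consequently, for every P > 1 and τ > 0 with P τ e^{1+τ} < 1, one has e^{−τ} > P ln((P² + P)/(P² + 1)); that is, the region in the (τ,P)-plane bounded by the curve Pτe^{1+τ} = 1 and the coordinate axes is contained in the region bounded by the curve e^{−τ} = P ln((P²+P)/(P²+1)) and the coordinate axes. -/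
/-!
Since `e = (e - 1) + 1` with `e - 1 > 1`, the first inequality is `e^τ` times
`e^{(e-1)τ} > eτ + e^{-τ}`, which follows from the quadratic Taylor lower bound for `e^{(e-1)τ}`
and the upper bound `e^{-τ} ≤ 1 - τ + τ²/2`.

For the second, `ln y ≤ y - 1` gives `P ln((P²+P)/(P²+1)) ≤ P(P-1)/(P²+1) < 1 - 1/P`, while the
hypothesis forces `τ < τ e^{1+τ} < 1/P`, so `1 - 1/P < 1 - τ ≤ e^{-τ}`.
-/

open Real

lemma exp_neg_le_one_sub_add_sq_div_two {x : ℝ} (hx : 0 ≤ x) : exp (-x) ≤ 1 - x + x ^ 2 / 2 := by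
  have hcubic : 1 + x + x ^ 2 / 2 + x ^ 3 / 6 ≤ exp x := by
    simpa [Finset.sum_range_succ, Nat.factorial, add_assoc] using sum_le_exp_of_nonneg hx 4
  rw [exp_neg, inv_le_iff_one_le_mul₀ (exp_pos x)]
  -- `(1 + x + x²/2 + x³/6) (1 - x + x²/2) = 1 + x³/6 + x⁴/12 + x⁵/12`
  nlinarith [mul_le_mul_of_nonneg_right hcubic (by nlinarith : 0 ≤ 1 - x + x ^ 2 / 2),
    pow_nonneg hx 3, pow_nonneg hx 4, pow_nonneg hx 5]

lemma add_one_mul_add_exp_neg_lt_exp_mul {a x : ℝ} (ha : 1 < a) (hx : 0 < x) :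
    (a + 1) * x + exp (-x) < exp (a * x) :=
  calc (a + 1) * x + exp (-x) ≤ (a + 1) * x + (1 - x + x ^ 2 / 2) := by
        gcongr; exact exp_neg_le_one_sub_add_sq_div_two hx.le
    _ = 1 + a * x + x ^ 2 / 2 := by ring
    _ < 1 + a * x + (a * x) ^ 2 / 2 := by
        gcongr; exact lt_mul_of_one_lt_left hx ha
    _ ≤ exp (a * x) := quadratic_le_exp_of_nonneg (by positivity)

lemma mul_exp_one_add_add_one_lt_exp_exp_one_mul {τ : ℝ} (hτ : 0 < τ) :
    τ * exp (1 + τ) + 1 < exp (exp 1 * τ) :=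
  calc τ * exp (1 + τ) + 1 = exp τ * ((exp 1 - 1 + 1) * τ + exp (-τ)) := by
        rw [exp_add, exp_neg]; field_simp; ring
    _ < exp τ * exp ((exp 1 - 1) * τ) := by
        gcongr; exact add_one_mul_add_exp_neg_lt_exp_mul (by linarith [exp_one_gt_two]) hτ
    _ = exp (exp 1 * τ) := by rw [← exp_add]; ring_nf

lemma mul_log_div_lt_one_sub_inv {P : ℝ} (hP : 1 < P) :
    P * log ((P ^ 2 + P) / (P ^ 2 + 1)) < 1 - P⁻¹ := by
  have hP0 : 0 < P := by linarith
  calc P * log ((P ^ 2 + P) / (P ^ 2 + 1)) ≤ P * ((P ^ 2 + P) / (P ^ 2 + 1) - 1) := by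
        gcongr; exact log_le_sub_one_of_pos (by positivity)
    _ < 1 - P⁻¹ := by
        rw [← sub_pos]; field_simp; nlinarith

/-- `e^{eτ} > τ e^{1+τ} + 1` for every `τ > 0`, and consequently, for all
`P > 1` and `τ > 0` with `P τ e^{1+τ} < 1`, one has
`e^{-τ} > P ln((P² + P)/(P² + 1))`. -/
theorem stmt_19 :
    (∀ τ : ℝ, 0 < τ → τ * Real.exp (1 + τ) + 1 < Real.exp (Real.exp 1 * τ)) ∧
    (∀ P τ : ℝ, 1 < P → 0 < τ → P * τ * Real.exp (1 + τ) < 1 →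
      P * Real.log ((P^2 + P) / (P^2 + 1)) < Real.exp (-τ)) := by
  refine ⟨fun τ hτ ↦ mul_exp_one_add_add_one_lt_exp_exp_one_mul hτ, fun P τ hP hτ hcond ↦ ?_⟩
  have hP0 : 0 < P := by linarith
  have hτ_lt : τ < P⁻¹ :=
    calc τ < τ * exp (1 + τ) := lt_mul_of_one_lt_right hτ (one_lt_exp_iff.2 (by linarith))
      _ < P⁻¹ := by rwa [← mul_one P⁻¹, lt_inv_mul_iff₀ hP0, ← mul_assoc]
  calc P * log ((P ^ 2 + P) / (P ^ 2 + 1)) < 1 - P⁻¹ := mul_log_div_lt_one_sub_inv hP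
    _ < 1 - τ := by linarith
    _ ≤ exp (-τ) := by linarith [add_one_le_exp (-τ)]
end
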